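/- arXiv:1205.4960 — 2 statements merged into one kernel-verified Lean document; each statement's English description precedes it below -/
import Mathlib

section
/- Let Ω be a set, G = Sym(Ω), and g ∈ G. Then the centralizer of g in G is meet-coherent: the set of orbit partitions of elements of Cent_G(g) is closed under meets in the partition lattice of Ω. Moreover, if for every k ≥ 2 (including k = ∞) the number of orbits of g of size k is finite, then Cent_G(g) is also join-coherent. -/
/-!
Let `a, b` commute with `g` and let `R` be `π(a) ∧ π(b)` or `π(a) ∨ π(b)`. Then `g` permutes the
`R`-classes, every class `C` is countable, and all points of `C` have the same `g`-period, since
they are images of each other under elements of `⟨a, b⟩ ≤ Cent(g)`. Let `g ^ t` generate the powers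
of `g` stabilising `C`. If `g ^ t` acts trivially on `C`, or with finitely many orbits (which then
all have the same length), then `C` can be enumerated as `ℤ / m` so that `g ^ t` becomes a
translation, and the shift by one is a cyclic permutation of `C` commuting with `g ^ t`.
Conjugating it by powers of `g` onto the other classes of the `⟨g⟩`-orbit of `C`, and gluing over
all classes, gives `c ∈ Cent(g)` with `π(c) = R`.

For the meet, `g ^ t` acts on the `a`-orbit containing `C` as a power `a ^ k` with `k ≠ 0`, which
has at most `|k|` orbits there. For the join, a class meets only `g`-orbits of one size; if that
size is finite and at least `2` there are finitely many such orbits, and if it is infinite there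
are finitely many infinite orbits, each the union of `|t|` orbits of `g ^ t`.
-/

/-- The orbit partition of a permutation `g`, as a setoid on `Ω`. -/
def piPart {Ω : Type*} (g : Equiv.Perm Ω) : Setoid Ω :=
  MulAction.orbitRel (Subgroup.zpowers g) Ω

/-- The set of orbit partitions of elements of a permutation group `G`. -/
def piSet {Ω : Type*} (G : Subgroup (Equiv.Perm Ω)) : Set (Setoid Ω) :=
  {P | ∃ g ∈ G, piPart g = P}

/-- `G` is join-coherent if its set of orbit partitions is closed under joins. -/
def JoinCoherent {Ω : Type*} (G : Subgroup (Equiv.Perm Ω)) : Prop :=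
  ∀ P ∈ piSet G, ∀ Q ∈ piSet G, P ⊔ Q ∈ piSet G

/-- `G` is meet-coherent if its set of orbit partitions is closed under meets. -/
def MeetCoherent {Ω : Type*} (G : Subgroup (Equiv.Perm Ω)) : Prop :=
  ∀ P ∈ piSet G, ∀ Q ∈ piSet G, P ⊓ Q ∈ piSet G

open Equiv Function

section

variable {Ω : Type*}

theorem Setoid.rel_iff_of_rel {α : Type*} (r : Setoid α) {a b : α} (h : r a b) (c : α) :
    r a c ↔ r b c :=
  ⟨r.trans' (r.symm' h), r.trans' h⟩

def Setoid.IsInvariant (R : Setoid Ω) (g : Perm Ω) : Prop :=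
  ∀ (n : ℤ) (x y : Ω), R ((g ^ n) x) ((g ^ n) y) ↔ R x y

theorem piPart_iff {h : Perm Ω} {x y : Ω} : piPart h x y ↔ ∃ n : ℤ, (h ^ n) y = x := by
  rw [piPart, MulAction.orbitRel_apply, MulAction.mem_orbit_iff, Subgroup.exists_zpowers]
  rfl

theorem piPart_zpow_apply (h : Perm Ω) (n : ℤ) (x : Ω) : piPart h ((h ^ n) x) x :=
  piPart_iff.2 ⟨n, rfl⟩

theorem piPart_conj_apply_iff (h τ : Perm Ω) (x y : Ω) :
    piPart (h * τ * h⁻¹) (h x) (h y) ↔ piPart τ x y := by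
  simp only [piPart_iff, conj_zpow, Perm.mul_apply, Perm.coe_inv, symm_apply_apply,
    h.injective.eq_iff]

theorem piPart_apply_iff_of_commute {a k : Perm Ω} (h : Commute a k) (x y : Ω) :
    piPart a (k x) (k y) ↔ piPart a x y := by
  simp only [piPart_iff]
  refine exists_congr fun n => ?_
  rw [← Perm.mul_apply, (h.zpow_left n).eq, Perm.mul_apply, k.injective.eq_iff]

theorem piPart_le_orbitRel {K : Subgroup (Perm Ω)} {a : Perm Ω} (ha : a ∈ K) :
    piPart a ≤ MulAction.orbitRel K Ω := fun x y h => by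
  obtain ⟨n, rfl⟩ := piPart_iff.1 h
  exact ⟨⟨a ^ n, zpow_mem ha n⟩, rfl⟩

theorem Setoid.IsInvariant.sup {g : Perm Ω} {P Q : Setoid Ω} (hP : P.IsInvariant g)
    (hQ : Q.IsInvariant g) : (P ⊔ Q).IsInvariant g := by
  have hle : ∀ n : ℤ, P ⊔ Q ≤ (P ⊔ Q).comap (g ^ n) := fun n => sup_le
    (fun x y h => Setoid.le_def.1 le_sup_left ((hP n x y).2 h))
    (fun x y h => Setoid.le_def.1 le_sup_right ((hQ n x y).2 h))
  refine fun n x y => ⟨fun h => ?_, fun h => hle n h⟩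
  simpa [Setoid.comap_rel, ← Perm.mul_apply, ← zpow_add] using hle (-n) h

theorem Setoid.IsInvariant.inf {g : Perm Ω} {P Q : Setoid Ω} (hP : P.IsInvariant g)
    (hQ : Q.IsInvariant g) : (P ⊓ Q).IsInvariant g := fun n x y =>
  and_congr (hP n x y) (hQ n x y)

theorem piPart_isInvariant {a g : Perm Ω} (h : Commute a g) : (piPart a).IsInvariant g :=
  fun n => piPart_apply_iff_of_commute (h.zpow_right n)

section Presentation

variable {S : Type*}

theorem exists_perm_apply_eq_add_one {ψ : ℤ → S} (hψ : Surjective ψ) {m : ℤ}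
    (hker : ∀ n n', ψ n = ψ n' ↔ m ∣ n - n') : ∃ τ : Perm S, ∀ n, τ (ψ n) = ψ (n + 1) := by
  have hτ : ∀ n, ψ (surjInv hψ (ψ n) + 1) = ψ (n + 1) := fun n =>
    (hker _ _).2 (by simpa using (hker _ _).1 (surjInv_eq hψ (ψ n)))
  refine ⟨Equiv.ofBijective (fun s => ψ (surjInv hψ s + 1)) ⟨fun s s' h => ?_, fun s => ?_⟩, hτ⟩
  · rw [← surjInv_eq hψ s, ← surjInv_eq hψ s', hker]
    simpa using (hker _ _).1 h
  · obtain ⟨n, rfl⟩ := hψ s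
    exact ⟨ψ (n - 1), by simp [hτ]⟩

theorem zpow_apply_eq_add_of_apply_eq_add_one {τ : Perm S} {ψ : ℤ → S}
    (hτ : ∀ n, τ (ψ n) = ψ (n + 1)) (k n : ℤ) : (τ ^ k) (ψ n) = ψ (n + k) := by
  induction k using Int.induction_on generalizing n with
  | zero => simp
  | succ k ih =>
    rw [zpow_add_one, Perm.mul_apply, hτ, ih]
    congr 1; ring
  | pred k ih =>
    have : τ⁻¹ (ψ n) = ψ (n - 1) := by rw [Perm.inv_eq_iff_eq, hτ, sub_add_cancel]
    rw [zpow_sub_one, Perm.mul_apply, this, ih]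
    congr 1; ring

theorem exists_transitive_commute_of_presentation {ψ : ℤ → S} (hψ : Surjective ψ) {m : ℤ}
    (hker : ∀ n n', ψ n = ψ n' ↔ m ∣ n - n') {u : Perm S} {c : ℤ}
    (hu : ∀ n, u (ψ n) = ψ (n + c)) : ∃ τ : Perm S, Commute τ u ∧ ∀ s s', piPart τ s s' := by
  obtain ⟨τ, hτ⟩ := exists_perm_apply_eq_add_one hψ hker
  refine ⟨τ, Equiv.ext fun s => ?_, fun s s' => ?_⟩
  · obtain ⟨n, rfl⟩ := hψ s
    simp only [Perm.mul_apply, hu, hτ, add_right_comm]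
  · obtain ⟨n, rfl⟩ := hψ s
    obtain ⟨n', rfl⟩ := hψ s'
    exact piPart_iff.2 ⟨n - n', by rw [zpow_apply_eq_add_of_apply_eq_add_one hτ, add_sub_cancel]⟩

theorem exists_int_presentation (S : Type*) [Countable S] [Nonempty S] :
    ∃ (m : ℕ) (ψ : ℤ → S), Surjective ψ ∧ ∀ n n', ψ n = ψ n' ↔ (m : ℤ) ∣ n - n' := by
  obtain ⟨m, ⟨e⟩⟩ : ∃ m : ℕ, Nonempty (ZMod m ≃ S) := by
    rcases finite_or_infinite S with _ | _
    · obtain ⟨m, ⟨e⟩⟩ := Finite.exists_equiv_fin S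
      have : NeZero m := ⟨(Fin.pos (e (Classical.arbitrary S))).ne'⟩
      exact ⟨m, ⟨(ZMod.finEquiv m).toEquiv.symm.trans e.symm⟩⟩
    · exact ⟨0, nonempty_equiv_of_countable (α := ℤ)⟩
  refine ⟨m, fun n => e n, e.surjective.comp ZMod.intCast_surjective, fun n n' => ?_⟩
  rw [e.injective.eq_iff, ZMod.intCast_eq_intCast_iff_dvd_sub, dvd_sub_comm]

theorem exists_int_presentation_of_finite_orbits {S : Type*} [Nonempty S] (u : Perm S)
    [Finite (Quotient (piPart u))] {d : ℤ} (hper : ∀ s (n : ℤ), (u ^ n) s = s ↔ d ∣ n) :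
    ∃ (m : ℤ) (ψ : ℤ → S) (c : ℤ), Surjective ψ ∧ (∀ n n', ψ n = ψ n' ↔ m ∣ n - n') ∧
      ∀ n, u (ψ n) = ψ (n + c) := by
  have : Nonempty (Quotient (piPart u)) := .map (Quotient.mk _) ‹_›
  obtain ⟨c, φ, hφ, hφker⟩ := exists_int_presentation (Quotient (piPart u))
  have hc : (c : ℤ) ≠ 0 := fun hc => not_injective_infinite_finite φ fun n n' h => by
    simpa [hc, sub_eq_zero] using (hφker n n').1 h
  -- `ψ (q * c + r) = u ^ q (y r)`, where `y` runs through representatives of the `u`-orbits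
  let y : ℤ → S := fun n => (φ n).out
  let ψ : ℤ → S := fun n => (u ^ (n / c)) (y n)
  have hclass : ∀ n, Quotient.mk (piPart u) (ψ n) = φ n := fun n =>
    (Quotient.sound (piPart_zpow_apply u _ _)).trans (Quotient.out_eq _)
  have hshift : ∀ n k, ψ (n + c * k) = (u ^ k) (ψ n) := fun n k => by
    have hy : y (n + c * k) = y n := by
      simp only [y, (hφker (n + c * k) n).2 ⟨k, by ring⟩]
    simp only [ψ, hy, Int.add_mul_ediv_left _ _ hc, add_comm (n / c), zpow_add, Perm.mul_apply]
  have hkey : ∀ n k, ψ (n + c * k) = ψ n ↔ d ∣ k := fun n k => by rw [hshift, hper]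
  refine ⟨c * d, ψ, c, fun s => ?_, fun n n' => ⟨fun h => ?_, fun ⟨j, hj⟩ => ?_⟩,
    fun n => by simpa using (hshift n 1).symm⟩
  · obtain ⟨n, hn⟩ := hφ (Quotient.mk _ s)
    obtain ⟨k, hk⟩ := piPart_iff.1 (Quotient.exact ((hclass n).trans hn).symm)
    exact ⟨n + c * k, by rw [hshift, hk]⟩
  · obtain ⟨k, hk⟩ := (hφker n n').1 ((hclass n).symm.trans ((congrArg _ h).trans (hclass n')))
    obtain rfl : n = n' + c * k := by rw [← hk]; ring
    simpa using mul_dvd_mul_left (c : ℤ) ((hkey n' k).1 h)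
  · obtain rfl : n = n' + c * (d * j) := by rw [← mul_assoc, ← hj]; ring
    exact (hkey n' _).2 (dvd_mul_right d j)

theorem finite_quotient_of_forall_exists_rel {S : Type*} (r : Setoid S) {F : Set S}
    (hF : F.Finite) (h : ∀ s, ∃ f ∈ F, r s f) : Finite (Quotient r) := by
  refine Set.finite_univ_iff.1 (hF.image (Quotient.mk r) |>.subset fun q _ => ?_)
  obtain ⟨f, hf, hsf⟩ := h q.out
  exact ⟨f, hf, (Quotient.sound (r.symm' hsf)).trans q.out_eq⟩

end Presentation

section Glue

variable {R : Setoid Ω}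

theorem mk_zpow_apply_eq_mk {φ : Quotient R → Perm Ω}
    (hφ : ∀ x y, piPart (φ (Quotient.mk R x)) x y ↔ R x y) (n : ℤ) (x : Ω) :
    Quotient.mk R ((φ (Quotient.mk R x) ^ n) x) = Quotient.mk R x :=
  Quotient.sound (R.symm' ((hφ _ _).1 ((piPart _).symm' (piPart_zpow_apply _ n x))))

def gluePerm (φ : Quotient R → Perm Ω) (hφ : ∀ x y, piPart (φ (Quotient.mk R x)) x y ↔ R x y) :
    Perm Ω where
  toFun x := φ (Quotient.mk R x) x
  invFun x := (φ (Quotient.mk R x))⁻¹ x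
  left_inv x := by
    simpa [Perm.coe_inv] using congrArg (fun q => (φ q)⁻¹ (φ (Quotient.mk R x) x))
      (mk_zpow_apply_eq_mk hφ 1 x)
  right_inv x := by
    simpa [Perm.coe_inv] using congrArg (fun q => φ q ((φ (Quotient.mk R x))⁻¹ x))
      (mk_zpow_apply_eq_mk hφ (-1) x)

theorem gluePerm_apply {φ : Quotient R → Perm Ω}
    (hφ : ∀ x y, piPart (φ (Quotient.mk R x)) x y ↔ R x y) (x : Ω) :
    gluePerm φ hφ x = φ (Quotient.mk R x) x :=
  rfl

theorem gluePerm_inv_apply {φ : Quotient R → Perm Ω}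
    (hφ : ∀ x y, piPart (φ (Quotient.mk R x)) x y ↔ R x y) (x : Ω) :
    (gluePerm φ hφ)⁻¹ x = (φ (Quotient.mk R x))⁻¹ x :=
  rfl

theorem gluePerm_zpow_apply {φ : Quotient R → Perm Ω}
    (hφ : ∀ x y, piPart (φ (Quotient.mk R x)) x y ↔ R x y) (n : ℤ) (x : Ω) :
    (gluePerm φ hφ ^ n) x = (φ (Quotient.mk R x) ^ n) x := by
  induction n using Int.induction_on generalizing x with
  | zero => rfl
  | succ n ih =>
    have hx := mk_zpow_apply_eq_mk hφ 1 x
    rw [zpow_one] at hx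
    rw [zpow_add_one, Perm.mul_apply, ih, gluePerm_apply, hx, zpow_add_one, Perm.mul_apply]
  | pred n ih =>
    have hx := mk_zpow_apply_eq_mk hφ (-1) x
    rw [zpow_neg_one] at hx
    rw [zpow_sub_one, Perm.mul_apply, ih, gluePerm_inv_apply, hx, zpow_sub_one, Perm.mul_apply]

theorem piPart_gluePerm {φ : Quotient R → Perm Ω}
    (hφ : ∀ x y, piPart (φ (Quotient.mk R x)) x y ↔ R x y) : piPart (gluePerm φ hφ) = R :=
  Setoid.ext fun x y => by
    rw [piPart_iff]
    simp_rw [gluePerm_zpow_apply]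
    rw [← piPart_iff, Setoid.comm', hφ, Setoid.comm']

end Glue

def IsClassCycle (g : Perm Ω) (R : Setoid Ω) (x₀ : Ω) (τ : Perm Ω) : Prop :=
  (∀ y, piPart τ x₀ y ↔ R x₀ y) ∧
    ∀ m : ℤ, R x₀ ((g ^ m) x₀) → ∀ y, R x₀ y → τ ((g ^ m) y) = (g ^ m) (τ y)

section ClassCycle

variable {g : Perm Ω} {R : Setoid Ω}

theorem piPart_conj_iff (hR : R.IsInvariant g) {r : Ω} {τ : Perm Ω} (hτ : IsClassCycle g R r τ)
    {s : ℤ} {x : Ω} (hx : R ((g ^ s) r) x) (y : Ω) :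
    piPart (g ^ s * τ * (g ^ s)⁻¹) x y ↔ R x y := by
  have key : ∀ y, piPart (g ^ s * τ * (g ^ s)⁻¹) ((g ^ s) r) y ↔ R ((g ^ s) r) y := fun y => by
    obtain ⟨z, rfl⟩ := (g ^ s).surjective y
    rw [piPart_conj_apply_iff, hR, hτ.1]
  rw [← Setoid.rel_iff_of_rel _ ((key x).2 hx), key, Setoid.rel_iff_of_rel _ hx]

theorem conj_apply_eq_conj_apply (hR : R.IsInvariant g) {r : Ω} {τ : Perm Ω}
    (hτ : IsClassCycle g R r τ) {s s' : ℤ} {y : Ω} (hs : R ((g ^ s) r) y) (hs' : R ((g ^ s') r) y) :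
    (g ^ s * τ * (g ^ s)⁻¹) y = (g ^ s' * τ * (g ^ s')⁻¹) y := by
  obtain ⟨z, rfl⟩ := (g ^ s).surjective y
  have hz : R r z := (hR s _ _).1 hs
  have hm : R r ((g ^ (s - s')) r) := by
    rw [← hR s', ← Perm.mul_apply, ← zpow_add, add_sub_cancel]
    exact R.trans' hs' (R.symm' hs)
  have hyz : (g ^ s')⁻¹ ((g ^ s) z) = (g ^ (s - s')) z := by
    rw [← Perm.mul_apply, ← zpow_neg, ← zpow_add, neg_add_eq_sub]
  rw [Perm.mul_apply, Perm.mul_apply, Perm.mul_apply, Perm.mul_apply, hyz, hτ.2 _ hm _ hz,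
    Perm.coe_inv, symm_apply_apply, ← Perm.mul_apply (g ^ s'), ← zpow_add, add_sub_cancel]

theorem exists_zpow_of_sup_piPart (hR : R.IsInvariant g) {x y : Ω}
    (h : (R ⊔ piPart g) x y) : ∃ s : ℤ, R ((g ^ s) x) y := by
  rw [Setoid.sup_eq_eqvGen] at h
  induction h with
  | rel x y h =>
    rcases h with h | h
    · exact ⟨0, h⟩
    · obtain ⟨n, rfl⟩ := piPart_iff.1 h
      exact ⟨-n, by rw [← Perm.mul_apply, ← zpow_add, neg_add_cancel]; exact R.refl' y⟩
  | refl x => exact ⟨0, R.refl' x⟩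
  | symm x y _ ih =>
    obtain ⟨s, hs⟩ := ih
    refine ⟨-s, R.symm' ?_⟩
    rw [← hR (-s), ← Perm.mul_apply, ← zpow_add, neg_add_cancel] at hs
    exact hs
  | trans x y z _ _ ih₁ ih₂ =>
    obtain ⟨s, hs⟩ := ih₁
    obtain ⟨s', hs'⟩ := ih₂
    refine ⟨s' + s, R.trans' ?_ hs'⟩
    rwa [← hR s', ← Perm.mul_apply, ← zpow_add] at hs

theorem mem_piSet_centralizer_of_isClassCycle (hR : R.IsInvariant g)
    (hτ : ∀ x₀, ∃ τ, IsClassCycle g R x₀ τ) : R ∈ piSet (Subgroup.centralizer {g}) := by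
  choose τ hτ using hτ
  -- `rep x` represents the `⟨g⟩`-orbit of the class of `x`; `g ^ sel x` moves it into that class
  let rep : Ω → Ω := fun x => (Quotient.mk (R ⊔ piPart g) x).out
  have hrep : ∀ x x', (R ⊔ piPart g) x x' → rep x = rep x' := fun x x' h =>
    congrArg Quotient.out (Quotient.sound h)
  choose sel hsel using fun x =>
    exists_zpow_of_sup_piPart hR (Quotient.mk_out (s := R ⊔ piPart g) x)
  let κ : Ω → Perm Ω := fun x => g ^ sel x * τ (rep x) * (g ^ sel x)⁻¹
  have hκ : ∀ x y, piPart (κ (Quotient.mk R x).out) x y ↔ R x y := fun x =>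
    piPart_conj_iff hR (hτ _) (R.trans' (hsel _) (Quotient.mk_out x))
  refine ⟨gluePerm (fun q => κ q.out) hκ, Subgroup.mem_centralizer_singleton_iff.2 ?_,
    piPart_gluePerm hκ⟩
  ext x
  let w := (Quotient.mk R x).out
  let w' := (Quotient.mk R (g x)).out
  have hgx : piPart g (g x) x := by simpa using piPart_zpow_apply g 1 x
  have hw : rep w' = rep w := hrep _ _ <| (R ⊔ piPart g).trans'
    (Setoid.le_def.1 le_sup_left (Quotient.mk_out (g x))) <| (R ⊔ piPart g).trans'
    (Setoid.le_def.1 le_sup_right hgx) (Setoid.le_def.1 le_sup_left (R.symm' (Quotient.mk_out x)))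
  have hs : R ((g ^ sel w') (rep w)) (g x) := hw ▸ R.trans' (hsel w') (Quotient.mk_out (g x))
  have hs' : R ((g ^ (1 + sel w)) (rep w)) (g x) := by
    simpa [zpow_one_add] using (hR 1 _ _).2 (R.trans' (hsel w) (Quotient.mk_out x))
  change κ w' (g x) = g (κ w x)
  rw [show g (κ w x) = (g ^ (1 + sel w) * τ (rep w) * (g ^ (1 + sel w))⁻¹) (g x) by
    simp [κ, zpow_one_add, mul_inv_rev, Perm.mul_apply]]
  simp only [κ, hw]
  exact conj_apply_eq_conj_apply hR (hτ _) hs hs'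

theorem exists_rel_zpow_iff_dvd (hR : R.IsInvariant g) (x₀ : Ω) :
    ∃ t : ℤ, ∀ m, R x₀ ((g ^ m) x₀) ↔ t ∣ m := by
  let H : AddSubgroup ℤ :=
    { carrier := {m | R x₀ ((g ^ m) x₀)}
      zero_mem' := R.refl' x₀
      add_mem' := fun {m n} hm hn => by
        have := (hR n _ _).2 hm
        rw [← Perm.mul_apply, ← zpow_add, add_comm] at this
        exact R.trans' hn this
      neg_mem' := fun {m} hm => by
        have := (hR (-m) _ _).2 hm
        rw [← Perm.mul_apply, ← zpow_add, neg_add_cancel] at this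
        exact R.symm' this }
  obtain ⟨t, ht⟩ := Int.subgroup_cyclic H
  exact ⟨t, fun m => by
    rw [← Int.mem_zmultiples_iff, AddSubgroup.zmultiples_eq_closure, ← ht]; rfl⟩

theorem exists_isClassCycle_of_subtype {x₀ : Ω} {t : ℤ} (ht : ∀ m, R x₀ ((g ^ m) x₀) → t ∣ m)
    (hu : ∀ y, R x₀ ((g ^ t) y) ↔ R x₀ y) {σ : Perm {y // R x₀ y}}
    (hσu : Commute σ ((g ^ t).subtypePerm hu)) (hσ : ∀ y, piPart σ y ⟨x₀, R.refl' x₀⟩) :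
    ∃ τ, IsClassCycle g R x₀ τ := by
  classical
  refine ⟨Perm.ofSubtype σ, fun y => ⟨fun h => ?_, fun h => ?_⟩, fun m hm y hy => ?_⟩
  · obtain ⟨n, rfl⟩ := piPart_iff.1 ((piPart _).symm' h)
    rw [← map_zpow, Perm.ofSubtype_apply_of_mem _ (R.refl' x₀)]
    exact Subtype.property _
  · obtain ⟨n, hn⟩ := piPart_iff.1 (hσ ⟨y, h⟩)
    refine (piPart _).symm' (piPart_iff.2 ⟨n, ?_⟩)
    rw [← map_zpow, Perm.ofSubtype_apply_of_mem _ (R.refl' x₀), hn]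
  · obtain ⟨j, rfl⟩ := ht m hm
    have hu_zpow : ∀ z, (((g ^ t).subtypePerm hu ^ j) z : Ω) = (g ^ (t * j)) z := fun z => by
      simp only [Perm.subtypePerm_zpow, Perm.subtypePerm_apply, zpow_mul]
    rw [← hu_zpow ⟨y, hy⟩, Perm.ofSubtype_apply_of_mem _ (Subtype.property _),
      Perm.ofSubtype_apply_of_mem _ hy, ← Perm.mul_apply, (hσu.zpow_right j).eq, Perm.mul_apply,
      hu_zpow]

theorem exists_isClassCycle (hR : R.IsInvariant g) (x₀ : Ω)
    (hcount : {y | R x₀ y}.Countable)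
    (hper : ∀ y, R x₀ y → ∀ n : ℤ, (g ^ n) y = y ↔ (g ^ n) x₀ = x₀)
    (hfin : ∀ t : ℤ, (g ^ t) x₀ ≠ x₀ → R x₀ ((g ^ t) x₀) →
      ∃ F : Set Ω, F.Finite ∧ ∀ y, R x₀ y → ∃ f ∈ F, ∃ q : ℤ, (g ^ (t * q)) f = y) :
    ∃ τ, IsClassCycle g R x₀ τ := by
  obtain ⟨t, ht⟩ := exists_rel_zpow_iff_dvd hR x₀
  have hclass : ∀ q y, R x₀ ((g ^ (t * q)) y) ↔ R x₀ y := fun q y => by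
    rw [Setoid.rel_iff_of_rel _ ((ht _).2 (dvd_mul_right t q)), hR]
  have hu : ∀ y, R x₀ ((g ^ t) y) ↔ R x₀ y := by simpa using hclass 1
  let u := (g ^ t).subtypePerm hu
  have hu_zpow : ∀ (q : ℤ) (y : {y // R x₀ y}), ((u ^ q) y : Ω) = (g ^ (t * q)) y := fun q y => by
    simp only [u, Perm.subtypePerm_zpow, Perm.subtypePerm_apply, zpow_mul]
  have : Countable {y // R x₀ y} := hcount.to_subtype
  have : Nonempty {y // R x₀ y} := ⟨⟨x₀, R.refl' x₀⟩⟩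
  suffices ∃ σ : Perm {y // R x₀ y}, Commute σ u ∧ ∀ s s', piPart σ s s' by
    obtain ⟨σ, hσu, hσ⟩ := this
    exact exists_isClassCycle_of_subtype (fun m => (ht m).1) hu hσu (fun y => hσ _ _)
  by_cases hfix : (g ^ t) x₀ = x₀
  · have hu1 : u = 1 := Equiv.ext fun y => Subtype.ext ((hper y y.2 t).2 hfix)
    obtain ⟨m, ψ, hψ, hker⟩ := exists_int_presentation {y // R x₀ y}
    exact exists_transitive_commute_of_presentation hψ hker (c := 0) fun n => by simp [hu1]
  obtain ⟨F, hF, hcover⟩ := hfin t hfix ((ht t).2 dvd_rfl)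
  have : Finite (Quotient (piPart u)) := by
    refine finite_quotient_of_forall_exists_rel _ (hF.preimage Subtype.val_injective.injOn)
      fun s => ?_
    obtain ⟨f, hfF, q, hq⟩ := hcover s s.2
    have hf : R x₀ f := (hclass q f).1 (hq ▸ s.2)
    exact ⟨⟨f, hf⟩, hfF, piPart_iff.2 ⟨q, Subtype.ext ((hu_zpow q _).trans hq)⟩⟩
  have hper_u : ∀ s (n : ℤ), (u ^ n) s = s ↔
      ((minimalPeriod ((g ^ t) • ·) x₀ : ℕ) : ℤ) ∣ n := fun s n => by
    rw [← MulAction.zpow_smul_eq_iff_minimalPeriod_dvd, ← Subtype.coe_inj, hu_zpow, hper _ s.2,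
      zpow_mul]
    rfl
  obtain ⟨m, ψ, c, hψ, hker, hshift⟩ := exists_int_presentation_of_finite_orbits u hper_u
  exact exists_transitive_commute_of_presentation hψ hker hshift

end ClassCycle

theorem exists_lt_zpow_apply_eq_zpow_apply {u v : Perm Ω} (huv : Commute u v) {x : Ω} {k : ℤ}
    (hk0 : k ≠ 0) (hk : u x = (v ^ k) x) (p : ℤ) :
    ∃ r < k.natAbs, ∃ q : ℤ, (u ^ q) ((v ^ (r : ℤ)) x) = (v ^ p) x := by
  have huq : ∀ q : ℤ, (u ^ q) x = (v ^ (k * q)) x := fun q => by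
    have hw : ((v ^ k)⁻¹ * u) x = x := by rw [Perm.mul_apply, hk, Perm.coe_inv, symm_apply_apply]
    have := Perm.zpow_apply_eq_self_of_apply_eq_self hw q
    rwa [((huv.symm.zpow_left k).inv_left).mul_zpow, Perm.mul_apply, inv_zpow,
      Perm.inv_eq_iff_eq, ← zpow_mul] at this
  have := Int.emod_lt p hk0
  refine ⟨(p % k).toNat, by omega, p / k, ?_⟩
  rw [← Perm.mul_apply, (huv.zpow_zpow _ _).eq, Perm.mul_apply, huq, ← Perm.mul_apply, ← zpow_add,
    Int.toNat_of_nonneg (Int.emod_nonneg p hk0), Int.emod_add_mul_ediv]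

theorem ncard_setOf_piPart (g : Perm Ω) (y : Ω) :
    {z | piPart g z y}.ncard = minimalPeriod g y := by
  rw [← Nat.card_coe_set_eq]
  exact (Nat.card_congr (MulAction.orbitZPowersEquiv g y)).trans (Nat.card_zmod _)

theorem minimalPeriod_eq_of_zpow_apply_eq_self_iff {g : Perm Ω} {x y : Ω}
    (h : ∀ n : ℤ, (g ^ n) x = x ↔ (g ^ n) y = y) : minimalPeriod g x = minimalPeriod g y :=
  minimalPeriod_eq_minimalPeriod_iff.2 fun n => by
    simpa [IsPeriodicPt, IsFixedPt, ← Perm.coe_pow] using h n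

theorem Subgroup.countable_closure {G : Type*} [Group G] {s : Set G} (hs : s.Countable) :
    Countable (Subgroup.closure s) := by
  have := hs.to_subtype
  rw [FreeGroup.closure_eq_range]
  exact (FreeGroup.lift Subtype.val).rangeRestrict_surjective.countable

section SupPiPart

variable {g a b : Perm Ω} {x y : Ω}

theorem exists_mem_closure_of_sup_piPart (h : (piPart a ⊔ piPart b) x y) :
    ∃ k ∈ Subgroup.closure {a, b}, k y = x := by
  have hle := sup_le (piPart_le_orbitRel (Subgroup.subset_closure (Set.mem_insert a {b})))
    (piPart_le_orbitRel (Subgroup.subset_closure (Set.mem_insert_of_mem a rfl)))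
  obtain ⟨⟨k, hk⟩, hky⟩ := Setoid.le_def.1 hle h
  exact ⟨k, hk, hky⟩

theorem countable_setOf_sup_piPart (x : Ω) : {y | (piPart a ⊔ piPart b) x y}.Countable := by
  have := Subgroup.countable_closure (Set.toFinite {a, b}).countable
  refine (Set.countable_range fun k : Subgroup.closure {a, b} => (k : Perm Ω) x).mono fun y h => ?_
  obtain ⟨k, hk, hkx⟩ := exists_mem_closure_of_sup_piPart ((piPart a ⊔ piPart b).symm' h)
  exact ⟨⟨k, hk⟩, hkx⟩

theorem zpow_apply_eq_self_iff_of_sup_piPart (ha : Commute a g) (hb : Commute b g)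
    (h : (piPart a ⊔ piPart b) x y) (n : ℤ) : (g ^ n) x = x ↔ (g ^ n) y = y := by
  obtain ⟨k, hk, rfl⟩ := exists_mem_closure_of_sup_piPart h
  have hkg : Commute k (g ^ n) := Subgroup.mem_centralizer_singleton_iff.1 <|
    (Subgroup.closure_le _).2 (by simp [Set.insert_subset_iff,
      Subgroup.mem_centralizer_singleton_iff, (ha.zpow_right n).eq, (hb.zpow_right n).eq]) hk
  rw [← Perm.mul_apply, ← hkg.eq, Perm.mul_apply, k.injective.eq_iff]

theorem mem_piSet_of_le_sup_piPart (ha : Commute a g) (hb : Commute b g)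
    {R : Setoid Ω} (hR : R.IsInvariant g)
    (hle : R ≤ piPart a ⊔ piPart b)
    (hfin : ∀ x₀ (t : ℤ), (g ^ t) x₀ ≠ x₀ → R x₀ ((g ^ t) x₀) →
      ∃ F : Set Ω, F.Finite ∧ ∀ y, R x₀ y → ∃ f ∈ F, ∃ q : ℤ, (g ^ (t * q)) f = y) :
    R ∈ piSet (Subgroup.centralizer {g}) :=
  mem_piSet_centralizer_of_isClassCycle hR fun x₀ => exists_isClassCycle hR x₀
    ((countable_setOf_sup_piPart x₀).mono fun _ h => Setoid.le_def.1 hle h)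
    (fun _ h n => (zpow_apply_eq_self_iff_of_sup_piPart ha hb (Setoid.le_def.1 hle h) n).symm)
    (hfin x₀)

theorem inf_piPart_mem_piSet (ha : Commute a g) (hb : Commute b g) :
    piPart a ⊓ piPart b ∈ piSet (Subgroup.centralizer {g}) := by
  refine mem_piSet_of_le_sup_piPart ha hb ((piPart_isInvariant ha).inf (piPart_isInvariant hb))
    inf_le_sup fun x₀ t hfix hx₀ => ?_
  obtain ⟨k, hk⟩ := piPart_iff.1 ((piPart a).symm' (Setoid.inf_iff_and.1 hx₀).1)
  have hk0 : k ≠ 0 := by rintro rfl; exact hfix hk.symm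
  refine ⟨(fun r : ℕ => (a ^ (r : ℤ)) x₀) '' Set.Iio k.natAbs, (Set.finite_Iio _).image _,
    fun y hy => ?_⟩
  obtain ⟨p, rfl⟩ := piPart_iff.1 ((piPart a).symm' (Setoid.inf_iff_and.1 hy).1)
  obtain ⟨r, hr, q, hq⟩ :=
    exists_lt_zpow_apply_eq_zpow_apply (ha.zpow_right t).symm hk0 hk.symm p
  exact ⟨_, ⟨r, hr, rfl⟩, q, by rwa [zpow_mul]⟩

theorem sup_piPart_mem_piSet (ha : Commute a g) (hb : Commute b g)
    (hfin : ∀ k : ℕ, 2 ≤ k → {c ∈ (piPart g).classes | c.ncard = k}.Finite)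
    (hinf : {c ∈ (piPart g).classes | c.Infinite}.Finite) :
    piPart a ⊔ piPart b ∈ piSet (Subgroup.centralizer {g}) := by
  refine mem_piSet_of_le_sup_piPart ha hb ((piPart_isInvariant ha).sup (piPart_isInvariant hb))
    le_rfl fun x₀ t hfix _ => ?_
  have hncard : ∀ y, (piPart a ⊔ piPart b) x₀ y → {z | piPart g z y}.ncard = minimalPeriod g x₀ :=
    fun y hy => by
      rw [ncard_setOf_piPart, minimalPeriod_eq_of_zpow_apply_eq_self_iff
        fun n => (zpow_apply_eq_self_iff_of_sup_piPart ha hb hy n).symm]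
  by_cases hP : minimalPeriod g x₀ = 0
  · -- the class meets finitely many `g`-orbits, all infinite, and each is `|t|` orbits of `g ^ t`
    have ht : t ≠ 0 := by rintro rfl; exact hfix rfl
    have : Nonempty Ω := ⟨x₀⟩
    choose! z hz using fun c (hc : c ∈ {c ∈ (piPart g).classes | c.Infinite}) => hc.1
    refine ⟨Set.image2 (fun c (r : ℕ) => (g ^ (r : ℤ)) (z c)) _ (Set.Iio t.natAbs),
      hinf.image2 _ (Set.finite_Iio _), fun y hy => ?_⟩
    have hyc : {w | piPart g w y} ∈ {c ∈ (piPart g).classes | c.Infinite} :=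
      ⟨Setoid.mem_classes _ y, fun hfin => (Set.nonempty_of_mem ((piPart g).refl' y)).ne_empty
        ((Set.ncard_eq_zero hfin).1 ((hncard y hy).trans hP))⟩
    have hyz : piPart g y (z _) := (Set.ext_iff.1 (hz _ hyc) y).1 ((piPart g).refl' y)
    obtain ⟨p, hp⟩ := piPart_iff.1 hyz
    obtain ⟨r, hr, q, hq⟩ :=
      exists_lt_zpow_apply_eq_zpow_apply ((Commute.refl g).zpow_left t) ht rfl p
    exact ⟨_, ⟨_, hyc, r, hr, rfl⟩, q, by rw [zpow_mul, hq, hp]⟩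
  · -- the class lies in the union of the finitely many `g`-orbits of its size `≥ 2`
    have hP1 : minimalPeriod g x₀ ≠ 1 := fun h1 =>
      hfix (Perm.zpow_apply_eq_self_of_apply_eq_self (minimalPeriod_eq_one_iff_isFixedPt.1 h1) t)
    refine ⟨{y | (piPart a ⊔ piPart b) x₀ y}, ?_, fun y hy => ⟨y, hy, 0, by simp⟩⟩
    refine ((hfin _ (by omega)).sUnion fun c hc => Set.finite_of_ncard_ne_zero (hc.2 ▸ hP)).subset
      fun y hy => ⟨{w | piPart g w y}, ⟨Setoid.mem_classes _ y, hncard y hy⟩, (piPart g).refl' y⟩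

end SupPiPart

end

/-- The centralizer in `Sym(Ω)` of any permutation `g` is meet-coherent; and if for every
`k ≥ 2` the number of orbits of `g` of size `k` is finite, and the number of infinite
orbits of `g` is finite, then the centralizer is also join-coherent. -/
theorem centralizer_coherence {Ω : Type*} (g : Equiv.Perm Ω) :
    MeetCoherent (Subgroup.centralizer {g}) ∧
    (((∀ k : ℕ, 2 ≤ k → {c ∈ (piPart g).classes | c.ncard = k}.Finite) ∧
        {c ∈ (piPart g).classes | c.Infinite}.Finite) →
      JoinCoherent (Subgroup.centralizer {g})) := by
  refine ⟨?_, fun ⟨hfin, hinf⟩ => ?_⟩ <;> rintro _ ⟨a, ha, rfl⟩ _ ⟨b, hb, rfl⟩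
  · exact inf_piPart_mem_piSet (Subgroup.mem_centralizer_singleton_iff.1 ha)
      (Subgroup.mem_centralizer_singleton_iff.1 hb)
  · exact sup_piPart_mem_piSet (Subgroup.mem_centralizer_singleton_iff.1 ha)
      (Subgroup.mem_centralizer_singleton_iff.1 hb) hfin hinf
end

section
/- A finite Frobenius group is join-coherent if and only if its degree is prime; and a finite Frobenius group is meet-coherent if and only if it is dihedral of prime degree (the dihedral group of order 2p acting on p points). -/
/-!
Write `π(g)` for `piPart g` and `n` for the degree. If `n = p` is prime, an element of `G` of
order `p` (Cauchy) is a `p`-cycle `z`, and counting shows that `1` and the fixed-point-free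
elements of `G` are exactly the powers of `z`, so `⟨z⟩` is normal in `G`. The join `π(a) ⊔ π(b)`
is the orbit partition of `⟨a, b⟩`, and a subgroup of `G` either contains a `p`-cycle or acts
faithfully by conjugation on `⟨z⟩`, hence embeds into `(ZMod p)ˣ` and is cyclic; either way its
orbit partition is some `π(w)`, `w ∈ G`.

Conversely, join-coherence yields an `n`-cycle `z ∈ G`, since the join of all `π(g)` is `⊤`. For
a proper divisor `q` of `n` and `h ∈ G_ω` of prime order `ℓ`, the join `π(z ^ q) ⊔ π(h)` is not
`⊤`, so it would be `π(k)` for a fixed-point-free `k`, which then lies in `⟨z⟩`. The classes of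
`π(k)` all have the same size, but `h` permutes each of them, fixing only `ω`; counting fixed
points modulo `ℓ` makes that size both `≡ 1` and `≡ 0`.

Meet-coherence makes `π(h) ⊓ π(t)` trivial for nontrivial `h, t` fixing different points, which
by counting forces `|G_ω| = 2`. Then `1` and the fixed-point-free elements form a subgroup `K` of
order `n`, inverted by the involution `s ∈ G_ω`, and `π(s) ≤ π(f)` for every `1 ≠ f ∈ K`. This
puts all squares of `K`, hence all of `K` (its elements have odd order), into `⟨f⟩`: `K` is
cyclic of prime order and `G = K ⋊ ⟨s⟩` is dihedral. Conversely, in the dihedral group of prime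
degree two distinct involutions have meet `⊥`, and every other element has orbit partition `⊥`
or `⊤`.
-/

section

open Equiv Finset
open scoped Pointwise

section OrbitPartition

variable {Ω : Type*}

theorem piPart_apply (g : Perm Ω) (x y : Ω) : piPart g x y ↔ g.SameCycle y x := by
  rw [piPart, MulAction.orbitRel_apply, MulAction.mem_orbit_iff, Subgroup.exists_zpowers]
  rfl

theorem piPart_apply_self (g : Perm Ω) (x : Ω) : piPart g (g x) x :=
  (piPart_apply g _ _).2 (Perm.SameCycle.refl g x).apply_right

theorem eq_of_piPart_of_apply_eq_self {g : Perm Ω} {x y : Ω} (hx : g x = x) (h : piPart g y x) :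
    y = x := by
  obtain ⟨k, rfl⟩ := (piPart_apply g y x).1 h
  exact Perm.zpow_apply_eq_self_of_apply_eq_self hx k

theorem piPart_one : piPart (1 : Perm Ω) = ⊥ := by
  ext x y
  simp [piPart_apply, eq_comm]

theorem piPart_eq_top_iff (g : Perm Ω) : piPart g = ⊤ ↔ ∀ x y, g.SameCycle x y := by
  simp only [Setoid.eq_top_iff, piPart_apply]
  exact forall_comm

theorem piPart_apply_apply_of_commute {g c : Perm Ω} (hc : Commute c g) (x y : Ω) :
    piPart g (c x) (c y) ↔ piPart g x y := by
  simp only [piPart_apply, Perm.SameCycle, ← Perm.mul_apply, ((hc.symm).zpow_left _).eq]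
  simp

theorem piPart_apply_of_mul_self_eq_one {g : Perm Ω} (hg : g * g = 1) (x y : Ω) :
    piPart g x y ↔ x = y ∨ g y = x := by
  rw [piPart_apply]
  constructor
  · rintro ⟨k, rfl⟩
    obtain ⟨m, rfl | rfl⟩ := Int.even_or_odd' k
    · simp [zpow_mul, pow_two, hg]
    · simp [zpow_add, zpow_mul, pow_two, hg]
  · rintro (rfl | rfl)
    exacts [.refl g x, (Perm.SameCycle.refl g y).apply_right]

end OrbitPartition

namespace Subgroup

variable {M α : Type*} [Group M] [MulAction M α]

theorem orbitRel_mono {A B : Subgroup M} (h : A ≤ B) :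
    MulAction.orbitRel A α ≤ MulAction.orbitRel B α := by
  rintro x y hxy
  obtain ⟨⟨u, hu⟩, rfl⟩ := MulAction.mem_orbit_iff.1 (MulAction.orbitRel_apply.1 hxy)
  exact MulAction.orbitRel_apply.2 (MulAction.mem_orbit_iff.2 ⟨⟨u, h hu⟩, rfl⟩)

theorem orbitRel_sup (A B : Subgroup M) :
    MulAction.orbitRel ↥(A ⊔ B) α = MulAction.orbitRel A α ⊔ MulAction.orbitRel B α := by
  refine le_antisymm ?_ (sup_le (orbitRel_mono le_sup_left) (orbitRel_mono le_sup_right))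
  set R := MulAction.orbitRel A α ⊔ MulAction.orbitRel B α
  have key : ∀ u ∈ A ⊔ B, ∀ y : α, R (u • y) y := by
    intro u hu
    rw [sup_eq_closure] at hu
    have mem : ∀ v ∈ (A : Set M) ∪ B, ∀ y : α, R (v • y) y := by
      rintro v (hv | hv) y
      · exact le_sup_left (α := Setoid α) (MulAction.orbitRel_apply.2 ⟨⟨v, hv⟩, rfl⟩)
      · exact le_sup_right (α := Setoid α) (MulAction.orbitRel_apply.2 ⟨⟨v, hv⟩, rfl⟩)
    induction hu using closure_induction'' with
    | mem v hv => exact mem v hv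
    | inv_mem v hv => exact fun y => by simpa using R.symm (mem v hv (v⁻¹ • y))
    | one => exact fun y => by simp
    | mul v w _ _ hv hw => exact fun y => by simpa [mul_smul] using R.trans (hv (w • y)) (hw y)
  rintro x y hxy
  obtain ⟨⟨u, hu⟩, rfl⟩ := MulAction.mem_orbit_iff.1 (MulAction.orbitRel_apply.1 hxy)
  exact key u hu y

theorem orbitRel_le_ker_of_le_stabilizer {A : Subgroup M} {S : Set α}
    (h : A ≤ MulAction.stabilizer M S) : MulAction.orbitRel A α ≤ Setoid.ker (· ∈ S) := by
  rintro x y hxy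
  obtain ⟨⟨u, hu⟩, rfl⟩ := MulAction.mem_orbit_iff.1 (MulAction.orbitRel_apply.1 hxy)
  exact propext (MulAction.mem_stabilizer_set.1 (h hu) y)

open scoped Classical in
theorem card_filter_mem [Fintype M] (H : Subgroup M) : #{g | g ∈ H} = Nat.card H := by
  rw [Nat.card_eq_fintype_card, Fintype.card_subtype]

end Subgroup

theorem orbitRel_mem_piSet_of_isCyclic {Ω : Type*} {G H : Subgroup (Perm Ω)} (hH : H ≤ G)
    [IsCyclic H] : MulAction.orbitRel H Ω ∈ piSet G := by
  obtain ⟨w, rfl⟩ := (H.isCyclic_iff_exists_zpowers_eq_top).1 inferInstance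
  exact ⟨w, hH (Subgroup.mem_zpowers w), rfl⟩

theorem isCyclic_mulAut_of_prime {Z : Type*} [Group Z] [IsCyclic Z] (hp : (Nat.card Z).Prime) :
    IsCyclic (MulAut Z) :=
  have : Fact (Nat.card Z).Prime := ⟨hp⟩
  isCyclic_of_injective (IsCyclic.mulAutMulEquiv Z).toMonoidHom (MulEquiv.injective _)

theorem Equiv.Perm.card_modEq_card_filter_apply_eq_self {α : Type*} [DecidableEq α]
    {f : Perm α} {ℓ : ℕ} [Fact ℓ.Prime] (hf : f ^ ℓ = 1) (S : Finset α)
    (hS : ∀ x, f x ∈ S ↔ x ∈ S) : #S ≡ #{x ∈ S | f x = x} [MOD ℓ] := by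
  set σ : Perm S := f.subtypePerm hS
  have hσ : σ ^ ℓ ^ 1 = 1 := by
    rw [pow_one, Perm.subtypePerm_pow, ← Perm.subtypePerm_one _ (fun _ => Iff.rfl)]
    simp only [hf]
  have hfix : σ.supportᶜ.map (Function.Embedding.subtype _) = {x ∈ S | f x = x} := by
    ext x
    simp [σ, and_comm]
  rw [← hfix, card_map, ← Fintype.card_coe S]
  exact (Perm.card_compl_support_modEq hσ).symm

section Dihedral

variable {H : Type*} [Group H] {n : ℕ} {ρ σ : H}

def dihedralGroupHom (hρ : ρ ^ n = 1) (hσ : σ * σ = 1) (hσρ : σ * ρ * σ = ρ⁻¹) :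
    DihedralGroup n →* H :=
  let ψ : ZMod n →+ Additive H := ZMod.lift n ⟨zmultiplesHom _ (Additive.ofMul ρ), by
    rw [zmultiplesHom_apply, natCast_zsmul, ← ofMul_pow, hρ, ofMul_one]⟩
  have hψ : ∀ k : ℤ, (ψ k).toMul = ρ ^ k := fun k => by simp [ψ, ZMod.lift_coe]
  have hconj : ∀ k : ℤ, σ * ρ ^ k * σ = ρ ^ (-k) := fun k => by
    have hσ' : σ⁻¹ = σ := inv_eq_of_mul_eq_one_left hσ
    calc σ * ρ ^ k * σ = (σ * ρ * σ⁻¹) ^ k := by rw [conj_zpow, hσ']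
      _ = ρ ^ (-k) := by rw [hσ', hσρ, inv_zpow']
  { toFun := fun
      | .r i => (ψ i).toMul
      | .sr i => σ * (ψ i).toMul
    map_one' := by
      rw [DihedralGroup.one_def]
      exact congrArg Additive.toMul (map_zero ψ)
    map_mul' := by
      rintro (i | i) (j | j) <;>
        obtain ⟨k, rfl⟩ := ZMod.intCast_surjective i <;>
        obtain ⟨l, rfl⟩ := ZMod.intCast_surjective j
      all_goals
        simp only [DihedralGroup.r_mul_r, DihedralGroup.r_mul_sr, DihedralGroup.sr_mul_r,
          DihedralGroup.sr_mul_sr, ← Int.cast_add, ← Int.cast_sub, hψ]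
      · rw [zpow_add]
      · rw [show ρ ^ k * (σ * ρ ^ l) = σ * (σ * ρ ^ k * σ) * ρ ^ l by
          simp only [← mul_assoc, hσ, one_mul], hconj, mul_assoc, ← zpow_add, neg_add_eq_sub]
      · rw [zpow_add, mul_assoc]
      · rw [← mul_assoc, hconj, ← zpow_add, neg_add_eq_sub] }

theorem dihedralGroupHom_r (hρ : ρ ^ n = 1) (hσ : σ * σ = 1) (hσρ : σ * ρ * σ = ρ⁻¹) (k : ℤ) :
    dihedralGroupHom hρ hσ hσρ (.r k) = ρ ^ k := by
  simp [dihedralGroupHom, ZMod.lift_coe]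

theorem dihedralGroupHom_sr (hρ : ρ ^ n = 1) (hσ : σ * σ = 1) (hσρ : σ * ρ * σ = ρ⁻¹) (k : ℤ) :
    dihedralGroupHom hρ hσ hσρ (.sr k) = σ * ρ ^ k := by
  simp [dihedralGroupHom, ZMod.lift_coe]

theorem nonempty_mulEquiv_dihedralGroup [NeZero n] (hH : Nat.card H = 2 * n)
    (hρ : orderOf ρ = n) (hσ : σ * σ = 1) (hσρ : σ * ρ * σ = ρ⁻¹)
    (hσρ' : σ ∉ Subgroup.zpowers ρ) : Nonempty (H ≃* DihedralGroup n) := by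
  set φ := dihedralGroupHom (hρ ▸ pow_orderOf_eq_one ρ) hσ hσρ
  have hinj : Function.Injective φ := by
    refine (injective_iff_map_eq_one φ).2 ?_
    rintro (i | i) h
    all_goals obtain ⟨k, rfl⟩ := ZMod.intCast_surjective i
    · rw [dihedralGroupHom_r, ← orderOf_dvd_iff_zpow_eq_one, hρ,
        ← ZMod.intCast_zmod_eq_zero_iff_dvd] at h
      rw [h, DihedralGroup.one_def]
    · rw [dihedralGroupHom_sr, mul_eq_one_iff_eq_inv, ← zpow_neg] at h
      exact absurd (h ▸ Subgroup.zpow_mem_zpowers ρ (-k)) hσρ'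
  have : Finite H :=
    Nat.finite_of_card_ne_zero (by rw [hH]; exact mul_ne_zero two_ne_zero (NeZero.ne n))
  exact ⟨(MulEquiv.ofBijective φ
    (hinj.bijective_of_nat_card_le (by rw [hH, DihedralGroup.nat_card]))).symm⟩

end Dihedral

section FullCycle

variable {Ω : Type*} {z : Perm Ω}

theorem eq_one_of_commute_of_apply_eq_self (hz : piPart z = ⊤) {g : Perm Ω} (hc : Commute g z)
    {x : Ω} (hx : g x = x) : g = 1 := by
  ext y
  obtain ⟨k, rfl⟩ := (piPart_eq_top_iff z).1 hz x y
  rw [← Perm.mul_apply, ((hc.zpow_right k).eq), Perm.mul_apply, hx, Perm.one_apply]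

theorem eq_one_of_mem_zpowers_of_apply_eq_self (hz : piPart z = ⊤) {u : Perm Ω}
    (hu : u ∈ Subgroup.zpowers z) {x : Ω} (hx : u x = x) : u = 1 := by
  obtain ⟨k, rfl⟩ := Subgroup.mem_zpowers_iff.1 hu
  exact eq_one_of_commute_of_apply_eq_self hz ((Commute.refl z).zpow_left k) hx

theorem apply_ne_self_of_piPart_eq_top [Nontrivial Ω] (hz : piPart z = ⊤) (x : Ω) : z x ≠ x := by
  intro hx
  obtain ⟨a, b, hab⟩ := exists_pair_ne Ω
  have hrel : piPart z a b := by rw [hz]; trivial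
  rw [eq_one_of_commute_of_apply_eq_self hz (Commute.refl z) hx, piPart_one] at hrel
  exact hab hrel

variable [Fintype Ω]

theorem orderOf_eq_card_of_piPart_eq_top [Nontrivial Ω] (hz : piPart z = ⊤) :
    orderOf z = Fintype.card Ω := by
  classical
  have hsupp : z.support = univ :=
    eq_univ_of_forall fun x => Perm.mem_support.2 (apply_ne_self_of_piPart_eq_top hz x)
  obtain ⟨x⟩ := (inferInstance : Nonempty Ω)
  have hcyc : z.IsCycle :=
    ⟨x, apply_ne_self_of_piPart_eq_top hz x, fun y _ => (piPart_eq_top_iff z).1 hz x y⟩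
  rw [hcyc.orderOf, hsupp, card_univ]

theorem piPart_eq_top_of_orderOf_eq_card (hp : (Fintype.card Ω).Prime)
    (h : orderOf z = Fintype.card Ω) : piPart z = ⊤ := by
  classical
  have hcyc := Perm.isCycle_of_prime_order'' hp h
  have hsupp : z.support = univ := eq_univ_of_card _ (hcyc.orderOf ▸ h)
  refine (piPart_eq_top_iff z).2 fun x y => hcyc.sameCycle ?_ ?_ <;>
    exact Perm.mem_support.1 (hsupp ▸ mem_univ _)

theorem not_piPart_pow_apply [Nontrivial Ω] (hz : piPart z = ⊤) {q : ℕ}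
    (hq : q ∣ Fintype.card Ω) (hq1 : q ≠ 1) (ω : Ω) : ¬piPart (z ^ q) (z ω) ω := by
  intro hrel
  obtain ⟨k, hk⟩ := (piPart_apply _ _ _).1 hrel
  have hzk : z ^ ((q : ℤ) * k) = z ^ (1 : ℤ) := by
    rw [zpow_one, ← inv_mul_eq_one, zpow_mul, zpow_natCast]
    refine eq_one_of_mem_zpowers_of_apply_eq_self hz
      (Subgroup.mul_mem _ (Subgroup.inv_mem _
        (Subgroup.zpow_mem _ (Subgroup.pow_mem _ (Subgroup.mem_zpowers z) q) k))
        (Subgroup.mem_zpowers z)) (x := ω) ?_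
    rw [Perm.mul_apply, Perm.inv_eq_iff_eq, hk]
  rw [zpow_eq_zpow_iff_modEq, orderOf_eq_card_of_piPart_eq_top hz] at hzk
  have hdvd := Int.modEq_iff_dvd.1 (hzk.of_dvd (Int.natCast_dvd_natCast.2 hq))
  rw [dvd_sub_left (dvd_mul_right _ _)] at hdvd
  exact hq1 (Nat.dvd_one.1 (by exact_mod_cast hdvd))

open scoped Classical in
theorem card_filter_piPart_eq (hz : piPart z = ⊤) {k : Perm Ω} (hk : k ∈ Subgroup.zpowers z)
    (x y : Ω) : #{v | piPart k v x} = #{v | piPart k v y} := by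
  obtain ⟨i, rfl⟩ := (piPart_eq_top_iff z).1 hz x y
  have hcomm : Commute (z ^ i) k := by
    obtain ⟨j, rfl⟩ := Subgroup.mem_zpowers_iff.1 hk
    exact (Commute.refl z).zpow_zpow i j
  have hmap : ({v | piPart k v x} : Finset Ω).map (z ^ i).toEmbedding =
      ({v | piPart k v ((z ^ i) x)} : Finset Ω) := by
    ext v
    obtain ⟨v, rfl⟩ := (z ^ i).surjective v
    simp [piPart_apply_apply_of_commute hcomm]
  rw [← hmap, card_map]

end FullCycle

variable {Ω : Type*}

structure IsFrobenius (G : Subgroup (Perm Ω)) : Prop where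
  exists_apply_eq : ∀ a b : Ω, ∃ g ∈ G, g a = b
  exists_ne_one_apply_eq_self : ∀ x : Ω, ∃ g ∈ G, g x = x ∧ g ≠ 1
  eq_one_of_apply_eq_self : ∀ g ∈ G, ∀ x y : Ω, x ≠ y → g x = x → g y = y → g = 1

open scoped Classical

/-- By Frobenius' theorem this is a subgroup; that is only needed, and proved
(`IsFrobenius.kernel`), when point stabilisers have order two. -/
noncomputable def frobeniusKernel [Fintype Ω] (G : Subgroup (Perm Ω)) : Finset (Perm Ω) :=
  {g | g ∈ G ∧ (g = 1 ∨ ∀ x, g x ≠ x)}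

theorem mem_frobeniusKernel [Fintype Ω] {G : Subgroup (Perm Ω)} {g : Perm Ω} :
    g ∈ frobeniusKernel G ↔ g ∈ G ∧ (g = 1 ∨ ∀ x, g x ≠ x) := by
  simp [frobeniusKernel]

theorem eq_one_of_mem_frobeniusKernel_of_apply_eq_self [Fintype Ω] {G : Subgroup (Perm Ω)}
    {g : Perm Ω} (hg : g ∈ frobeniusKernel G) {x : Ω} (hx : g x = x) : g = 1 :=
  (mem_frobeniusKernel.1 hg).2.resolve_right fun hfree => hfree x hx

namespace IsFrobenius

variable {G : Subgroup (Perm Ω)}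

theorem nontrivial [Nonempty Ω] (hG : IsFrobenius G) : Nontrivial Ω := by
  obtain ⟨x⟩ := (inferInstance : Nonempty Ω)
  obtain ⟨g, -, -, hg⟩ := hG.exists_ne_one_apply_eq_self x
  obtain ⟨y, hy⟩ := not_forall.1 (mt Perm.ext_iff.2 hg)
  exact ⟨g y, y, hy⟩

theorem eq_of_apply_eq_self (hG : IsFrobenius G) {g : Perm Ω} (hg : g ∈ G) (hg1 : g ≠ 1)
    {x y : Ω} (hx : g x = x) (hy : g y = y) : x = y :=
  not_ne_iff.1 fun hxy => hg1 (hG.eq_one_of_apply_eq_self g hg x y hxy hx hy)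

theorem piPart_inf_piPart_eq_bot_of_mul_self_eq_one (hG : IsFrobenius G) {a b : Perm Ω}
    (ha : a ∈ G) (hb : b ∈ G) (hab : a ≠ b) (haa : a * a = 1) (hbb : b * b = 1) :
    piPart a ⊓ piPart b = ⊥ := by
  ext v w
  simp only [Setoid.inf_iff_and, piPart_apply_of_mul_self_eq_one haa,
    piPart_apply_of_mul_self_eq_one hbb]
  refine ⟨fun ⟨hva, hvb⟩ => by_contra fun hvw => hab ?_, fun h => ⟨.inl h, .inl h⟩⟩
  obtain ⟨haw, hbw⟩ := And.intro (hva.resolve_left hvw) (hvb.resolve_left hvw)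
  have hav : a v = w := by rw [← haw, ← Perm.mul_apply, haa, Perm.one_apply]
  have hbv : b v = w := by rw [← hbw, ← Perm.mul_apply, hbb, Perm.one_apply]
  refine (inv_mul_eq_one.1 (hG.eq_one_of_apply_eq_self _ (G.mul_mem (G.inv_mem hb) ha) v w hvw
    ?_ ?_)).symm
  · rw [Perm.mul_apply, hav, Perm.inv_eq_iff_eq, hbv]
  · rw [Perm.mul_apply, haw, Perm.inv_eq_iff_eq, hbw]

theorem piPart_inf_piPart_eq_bot_of_meetCoherent (hG : IsFrobenius G) (hM : MeetCoherent G) {a b : Perm Ω}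
    (ha : a ∈ G) (hb : b ∈ G) {x y : Ω} (hxy : x ≠ y) (hax : a x = x) (hby : b y = y) :
    piPart a ⊓ piPart b = ⊥ := by
  obtain ⟨k, hkG, hk⟩ := hM _ ⟨a, ha, rfl⟩ _ ⟨b, hb, rfl⟩
  have hkx : k x = x := eq_of_piPart_of_apply_eq_self hax (hk ▸ piPart_apply_self k x).1
  have hky : k y = y := eq_of_piPart_of_apply_eq_self hby (hk ▸ piPart_apply_self k y).2
  rw [← hk, hG.eq_one_of_apply_eq_self k hkG x y hxy hkx hky, piPart_one]

theorem mul_apply_ne_self_of_meetCoherent (hG : IsFrobenius G) (hM : MeetCoherent G)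
    {h g : Perm Ω} (hhG : h ∈ G) (hgG : g ∈ G) (hh1 : h ≠ 1) (hg1 : g ≠ 1) {ω u : Ω}
    (huω : u ≠ ω) (hhω : h ω = ω) (hgu : g u = u) (x : Ω) : (h * g) x ≠ x := by
  intro hx
  by_cases hxω : x = ω
  · subst hxω
    have hgx : g x = x := by
      rw [Perm.mul_apply, ← Perm.eq_inv_iff_eq] at hx
      rw [hx, Perm.inv_eq_iff_eq, hhω]
    exact hg1 (hG.eq_one_of_apply_eq_self g hgG u x huω hgu hgx)
  · have hrel : (piPart h ⊓ piPart (h * g)) (h u) u :=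
      ⟨piPart_apply_self h u, by simpa [hgu] using piPart_apply_self (h * g) u⟩
    rw [hG.piPart_inf_piPart_eq_bot_of_meetCoherent hM hhG (G.mul_mem hhG hgG) (Ne.symm hxω) hhω hx] at hrel
    exact huω (hG.eq_of_apply_eq_self hhG hh1 hrel hhω)

/-! ### Counting -/

variable [Fintype Ω]

theorem card_filter_apply_eq (hG : IsFrobenius G) (x y : Ω) :
    #{g | g ∈ G ∧ g x = y} = #{g | g ∈ G ∧ g x = x} := by
  obtain ⟨g₀, hg₀, rfl⟩ := hG.exists_apply_eq x y
  refine card_nbij' (g₀⁻¹ * ·) (g₀ * ·) ?_ ?_ (fun g _ => by simp) (fun g _ => by simp)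
  · intro g hg
    simp only [coe_filter, mem_univ, true_and, Set.mem_ofPred_eq] at hg ⊢
    refine ⟨G.mul_mem (G.inv_mem hg₀) hg.1, ?_⟩
    simp [hg.2]
  · intro g hg
    simp only [coe_filter, mem_univ, true_and, Set.mem_ofPred_eq] at hg ⊢
    exact ⟨G.mul_mem hg₀ hg.1, by rw [Perm.mul_apply, hg.2]⟩

theorem card_eq_card_mul_card_stabilizer (hG : IsFrobenius G) (x : Ω) :
    #{g | g ∈ G} = Fintype.card Ω * #{g | g ∈ G ∧ g x = x} := by
  rw [card_eq_sum_card_fiberwise (f := fun g => g x) (t := univ) (fun _ _ => mem_univ _),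
    sum_congr rfl fun y _ => ?_, sum_const, card_univ, smul_eq_mul]
  rw [filter_filter]
  exact hG.card_filter_apply_eq x y

theorem card_stabilizer_eq (hG : IsFrobenius G) (x y : Ω) :
    #{g | g ∈ G ∧ g x = x} = #{g | g ∈ G ∧ g y = y} :=
  Nat.eq_of_mul_eq_mul_left (Fintype.card_pos_iff.2 ⟨x⟩)
    ((hG.card_eq_card_mul_card_stabilizer x).symm.trans (hG.card_eq_card_mul_card_stabilizer y))

theorem card_ne_one_fixing (hG : IsFrobenius G) (A : Finset Ω) (x : Ω) :
    #{g | g ∈ G ∧ g ≠ 1 ∧ ∃ a ∈ A, g a = a} = #A * (#{g | g ∈ G ∧ g x = x} - 1) := by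
  have hunion : ({g | g ∈ G ∧ g ≠ 1 ∧ ∃ a ∈ A, g a = a} : Finset (Perm Ω)) =
      A.biUnion fun a => ({g | g ∈ G ∧ g a = a} : Finset (Perm Ω)).erase 1 := by
    ext g
    simp only [mem_filter, mem_univ, true_and, mem_biUnion, mem_erase]
    tauto
  have hdisj : (A : Set Ω).PairwiseDisjoint fun a =>
      ({g | g ∈ G ∧ g a = a} : Finset (Perm Ω)).erase 1 := by
    intro a _ b _ hab
    simp only [Function.onFun, disjoint_left, mem_erase, mem_filter, mem_univ, true_and]
    rintro g ⟨hg1, hg, ha⟩ ⟨-, -, hb⟩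
    exact hab (hG.eq_of_apply_eq_self hg hg1 ha hb)
  rw [hunion, card_biUnion hdisj, sum_congr rfl fun a _ => ?_, sum_const, smul_eq_mul]
  rw [card_erase_of_mem (by simp), hG.card_stabilizer_eq a x]

theorem card_frobeniusKernel [Nonempty Ω] (hG : IsFrobenius G) :
    #(frobeniusKernel G) = Fintype.card Ω := by
  obtain ⟨x⟩ := (inferInstance : Nonempty Ω)
  have hsplit := card_filter_add_card_filter_not
    (s := ({g | g ∈ G} : Finset (Perm Ω))) (p := fun g => g = 1 ∨ ∀ x, g x ≠ x)
  have hrest : ({g | g ∈ G} : Finset (Perm Ω)).filter (fun g => ¬(g = 1 ∨ ∀ x, g x ≠ x)) =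
      ({g | g ∈ G ∧ g ≠ 1 ∧ ∃ a ∈ (univ : Finset Ω), g a = a} : Finset (Perm Ω)) := by
    ext g
    simp [not_or]
  rw [filter_filter, ← frobeniusKernel, hrest, hG.card_ne_one_fixing univ x, card_univ,
    hG.card_eq_card_mul_card_stabilizer x] at hsplit
  have hpos : 0 < #{g | g ∈ G ∧ g x = x} := card_pos.2 ⟨1, by simp⟩
  have := Nat.mul_sub_one (Fintype.card Ω) #{g | g ∈ G ∧ g x = x}
  have := Nat.le_mul_of_pos_right (Fintype.card Ω) hpos
  omega

/-! ### The cyclic kernel generated by a full cycle -/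

variable {z : Perm Ω}

theorem mem_zpowers_iff_mem_frobeniusKernel [Nonempty Ω] (hG : IsFrobenius G) (hzG : z ∈ G)
    (hz : piPart z = ⊤) (g : Perm Ω) : g ∈ Subgroup.zpowers z ↔ g ∈ frobeniusKernel G := by
  have hsub : ({g | g ∈ Subgroup.zpowers z} : Finset (Perm Ω)) ⊆ frobeniusKernel G := by
    intro g hg
    rw [mem_filter] at hg
    refine mem_frobeniusKernel.2 ⟨Subgroup.zpowers_le.2 hzG hg.2, or_iff_not_imp_left.2 ?_⟩
    exact fun hg1 x hx => hg1 (eq_one_of_mem_zpowers_of_apply_eq_self hz hg.2 hx)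
  have := hG.nontrivial
  have heq := eq_of_subset_of_card_le hsub (by
    rw [hG.card_frobeniusKernel, Subgroup.card_filter_mem, Nat.card_zpowers,
      orderOf_eq_card_of_piPart_eq_top hz])
  rw [← heq]
  simp

theorem conj_mem_zpowers [Nonempty Ω] (hG : IsFrobenius G) (hzG : z ∈ G) (hz : piPart z = ⊤)
    {g h : Perm Ω} (hg : g ∈ G) (hh : h ∈ Subgroup.zpowers z) :
    g * h * g⁻¹ ∈ Subgroup.zpowers z := by
  rw [hG.mem_zpowers_iff_mem_frobeniusKernel hzG hz, mem_frobeniusKernel] at hh ⊢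
  obtain ⟨hhG, rfl | hfree⟩ := hh
  · simp [G.one_mem]
  refine ⟨G.mul_mem (G.mul_mem hg hhG) (G.inv_mem hg), Or.inr fun x hx => hfree (g⁻¹ x) ?_⟩
  simpa using congrArg (⇑g⁻¹) hx

theorem le_normalizer_zpowers [Nonempty Ω] (hG : IsFrobenius G) (hzG : z ∈ G)
    (hz : piPart z = ⊤) : G ≤ Subgroup.normalizer (Subgroup.zpowers z : Set (Perm Ω)) := by
  intro g hg
  refine Subgroup.mem_normalizer_iff.2 fun h => ⟨hG.conj_mem_zpowers hzG hz hg, fun hconj => ?_⟩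
  simpa [mul_assoc] using hG.conj_mem_zpowers hzG hz (G.inv_mem hg) hconj

theorem isCyclic_of_forall_exists_apply_eq_self [Nonempty Ω] (hG : IsFrobenius G) (hzG : z ∈ G)
    (hz : piPart z = ⊤) (hp : (orderOf z).Prime) {H : Subgroup (Perm Ω)} (hH : H ≤ G)
    (hfix : ∀ u ∈ H, ∃ x, u x = x) : IsCyclic H := by
  let φ : H →* MulAut (Subgroup.zpowers z) := (Subgroup.zpowers z).normalizerMonoidHom.comp
    (Subgroup.inclusion (hH.trans (hG.le_normalizer_zpowers hzG hz)))
  have hφ : Function.Injective φ := by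
    refine (injective_iff_map_eq_one φ).2 fun u hu => Subtype.ext ?_
    have hcomm : (u : Perm Ω) * z * (u : Perm Ω)⁻¹ = z := by
      simpa [φ] using congrArg Subtype.val (DFunLike.congr_fun hu ⟨z, Subgroup.mem_zpowers z⟩)
    obtain ⟨x, hx⟩ := hfix u u.2
    exact eq_one_of_commute_of_apply_eq_self hz (mul_inv_eq_iff_eq_mul.1 hcomm) hx
  have := isCyclic_mulAut_of_prime (Z := Subgroup.zpowers z) (by rwa [Nat.card_zpowers])
  exact isCyclic_of_injective φ hφ

/-! ### Joins -/

theorem exists_piPart_eq_top_of_prime (hG : IsFrobenius G) (hp : (Fintype.card Ω).Prime) :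
    ∃ z ∈ G, piPart z = ⊤ := by
  have : Fact (Fintype.card Ω).Prime := ⟨hp⟩
  obtain ⟨x⟩ := Fintype.card_pos_iff.1 hp.pos
  obtain ⟨z, hz⟩ := exists_prime_orderOf_dvd_card' (G := G) (Fintype.card Ω) (by
    rw [← Subgroup.card_filter_mem, hG.card_eq_card_mul_card_stabilizer x]
    exact dvd_mul_right _ _)
  exact ⟨z, z.2, piPart_eq_top_of_orderOf_eq_card hp (by rw [Subgroup.orderOf_coe, hz])⟩

theorem piPart_eq_top_of_prime (hG : IsFrobenius G) (hp : (Fintype.card Ω).Prime) {g : Perm Ω}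
    (hg : g ∈ G) (hg1 : g ≠ 1) (hfree : ∀ x, g x ≠ x) : piPart g = ⊤ := by
  have : Nonempty Ω := Fintype.card_pos_iff.1 hp.pos
  obtain ⟨z, hzG, hz⟩ := hG.exists_piPart_eq_top_of_prime hp
  have hgz : g ∈ Subgroup.zpowers z :=
    (hG.mem_zpowers_iff_mem_frobeniusKernel hzG hz g).2 (mem_frobeniusKernel.2 ⟨hg, .inr hfree⟩)
  have := hG.nontrivial
  have hdvd := orderOf_dvd_of_mem_zpowers hgz
  rw [orderOf_eq_card_of_piPart_eq_top hz] at hdvd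
  refine piPart_eq_top_of_orderOf_eq_card hp ((hp.eq_one_or_self_of_dvd _ hdvd).resolve_left ?_)
  rwa [orderOf_eq_one_iff]

theorem orbitRel_mem_piSet_of_prime (hG : IsFrobenius G) (hp : (Fintype.card Ω).Prime)
    {H : Subgroup (Perm Ω)} (hH : H ≤ G) : MulAction.orbitRel H Ω ∈ piSet G := by
  -- `H` either contains a full cycle or acts faithfully by conjugation on the cyclic kernel.
  have : Nonempty Ω := Fintype.card_pos_iff.1 hp.pos
  by_cases hfree : ∃ u ∈ H, ∀ x, u x ≠ x
  · obtain ⟨u, huH, hu⟩ := hfree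
    obtain ⟨x⟩ := ‹Nonempty Ω›
    have htop := hG.piPart_eq_top_of_prime hp (hH huH) (fun h => hu x (by rw [h]; rfl)) hu
    refine ⟨u, hH huH, htop.trans (top_le_iff.1 ?_).symm⟩
    rw [← htop]
    exact Subgroup.orbitRel_mono (Subgroup.zpowers_le.2 huH)
  · simp only [not_exists, not_and, not_forall, not_not] at hfree
    obtain ⟨z, hzG, hz⟩ := hG.exists_piPart_eq_top_of_prime hp
    have := hG.nontrivial
    have := hG.isCyclic_of_forall_exists_apply_eq_self hzG hz
      (by rwa [orderOf_eq_card_of_piPart_eq_top hz]) hH hfree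
    exact orbitRel_mem_piSet_of_isCyclic hH

theorem joinCoherent_of_prime (hG : IsFrobenius G) (hp : (Fintype.card Ω).Prime) :
    JoinCoherent G := by
  rintro _ ⟨a, ha, rfl⟩ _ ⟨b, hb, rfl⟩
  rw [piPart, piPart, ← Subgroup.orbitRel_sup]
  exact hG.orbitRel_mem_piSet_of_prime hp
    (sup_le (Subgroup.zpowers_le.2 ha) (Subgroup.zpowers_le.2 hb))

theorem exists_piPart_eq_top_of_joinCoherent (hG : IsFrobenius G) (hJ : JoinCoherent G) :
    ∃ z ∈ G, piPart z = ⊤ := by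
  obtain ⟨z, hzG, hz⟩ := sup_mem (piSet G) ⟨1, G.one_mem, piPart_one⟩ hJ
    ({g | g ∈ G} : Finset (Perm Ω)) piPart fun g hg => ⟨g, (mem_filter.1 hg).2, rfl⟩
  refine ⟨z, hzG, hz.trans (Setoid.eq_top_iff.2 fun x y => ?_)⟩
  obtain ⟨g, hg, rfl⟩ := hG.exists_apply_eq y x
  exact le_sup (f := piPart) (by simp [hg]) (piPart_apply_self g y)

theorem exists_prime_orderOf_apply_eq_self (hG : IsFrobenius G) (x : Ω) :
    ∃ h ∈ G, h x = x ∧ (orderOf h).Prime := by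
  obtain ⟨h, hhG, hhx, hh1⟩ := hG.exists_ne_one_apply_eq_self x
  have hne : orderOf h ≠ 1 := mt orderOf_eq_one_iff.1 hh1
  set ℓ := (orderOf h).minFac
  have hℓ : ℓ ∣ orderOf h := Nat.minFac_dvd _
  refine ⟨h ^ (orderOf h / ℓ), G.pow_mem hhG _, Perm.pow_apply_eq_self_of_apply_eq_self hhx _, ?_⟩
  rw [orderOf_pow_of_dvd (Nat.div_ne_zero_iff_of_dvd hℓ |>.2
    ⟨(orderOf_pos h).ne', (Nat.minFac_pos _).ne'⟩) (Nat.div_dvd_of_dvd hℓ),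
    Nat.div_div_self hℓ (orderOf_pos h).ne']
  exact Nat.minFac_prime hne

theorem piPart_pow_apply_of_apply_eq_self [Nonempty Ω] (hG : IsFrobenius G) (hzG : z ∈ G)
    (hz : piPart z = ⊤) (q : ℕ) {u : Perm Ω} (hu : u ∈ G) {ω x : Ω} (huω : u ω = ω)
    (hx : piPart (z ^ q) x ω) : piPart (z ^ q) (u x) ω := by
  obtain ⟨k, rfl⟩ := (piPart_apply _ _ _).1 hx
  obtain ⟨c, hc⟩ := Subgroup.mem_zpowers_iff.1
    (hG.conj_mem_zpowers hzG hz hu (Subgroup.mem_zpowers z))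
  refine (piPart_apply _ _ _).2 ⟨c * k, ?_⟩
  have : u * (z ^ q) ^ k * u⁻¹ = (z ^ q) ^ (c * k) := by
    rw [← conj_zpow, ← conj_pow, ← hc, ← zpow_natCast, ← zpow_mul, ← zpow_mul,
      ← zpow_natCast, ← zpow_mul]
    ring_nf
  rw [← this, Perm.mul_apply, Perm.mul_apply, Perm.inv_eq_iff_eq.2 huω.symm]

theorem not_piPart_pow_sup_piPart_apply [Nonempty Ω] (hG : IsFrobenius G) (hzG : z ∈ G)
    (hz : piPart z = ⊤) {q : ℕ} (hq : q ∣ Fintype.card Ω) (hq1 : q ≠ 1) {h : Perm Ω}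
    (hhG : h ∈ G) {ω : Ω} (hhω : h ω = ω) : ¬(piPart (z ^ q) ⊔ piPart h) (z ω) ω := by
  -- The `⟨z ^ q⟩`-orbit of `ω` is invariant under the stabiliser of `ω`, since `G` normalises
  -- `⟨z⟩`; but it does not contain `z ω`.
  set B : Set Ω := {x | piPart (z ^ q) x ω}
  have hstab : Subgroup.zpowers (z ^ q) ⊔ Subgroup.zpowers h ≤
      MulAction.stabilizer (Perm Ω) B := by
    refine sup_le (Subgroup.zpowers_le.2 (MulAction.mem_stabilizer_set.2 fun x => ?_))
      (Subgroup.zpowers_le.2 (MulAction.mem_stabilizer_set.2 fun x => ?_))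
    · simp only [B, Set.mem_ofPred_eq, Perm.smul_def]
      exact ⟨(piPart _).trans ((piPart _).symm (piPart_apply_self _ x)),
        (piPart _).trans (piPart_apply_self _ x)⟩
    · refine ⟨fun hx => ?_, hG.piPart_pow_apply_of_apply_eq_self hzG hz q hhG hhω⟩
      simpa [B] using hG.piPart_pow_apply_of_apply_eq_self hzG hz q (G.inv_mem hhG)
        (by rw [Perm.inv_eq_iff_eq, hhω]) hx
  intro hrel
  rw [piPart, piPart, ← Subgroup.orbitRel_sup] at hrel
  have := hG.nontrivial
  exact not_piPart_pow_apply hz hq hq1 ω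
    ((Subgroup.orbitRel_le_ker_of_le_stabilizer hstab hrel).mpr ((piPart _).refl ω))

theorem piPart_eq_top_of_piPart_le (hG : IsFrobenius G) (hz : piPart z = ⊤) {k : Perm Ω}
    (hk : k ∈ Subgroup.zpowers z) {h : Perm Ω} (hhG : h ∈ G) (hh : (orderOf h).Prime) {ω : Ω}
    (hhω : h ω = ω) (hle : piPart h ≤ piPart k) : piPart k = ⊤ := by
  -- Counting fixed points of `h` modulo its prime order: the class of `ω` has size `≡ 1`, every
  -- other class size `≡ 0`, and all classes of an element of `⟨z⟩` have the same size.
  have : Fact (orderOf h).Prime := ⟨hh⟩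
  have hh1 : h ≠ 1 := fun h1 => hh.ne_one (orderOf_eq_one_iff.2 h1)
  let C : Ω → Finset Ω := fun y => {x | piPart k x y}
  have hC : ∀ y x, h x ∈ C y ↔ x ∈ C y := fun y x => by
    simp only [C, mem_filter, mem_univ, true_and]
    exact ⟨(piPart k).trans (hle ((piPart h).symm (piPart_apply_self h x))),
      (piPart k).trans (hle (piPart_apply_self h x))⟩
  have hfix : ∀ y, {x ∈ C y | h x = x} = if piPart k ω y then {ω} else ∅ := fun y => by
    ext x
    split_ifs with hωy <;> simp only [C, mem_filter, mem_univ, true_and, mem_singleton,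
      notMem_empty, iff_false, not_and]
    · exact ⟨fun ⟨_, hx⟩ => hG.eq_of_apply_eq_self hhG hh1 hx hhω, by rintro rfl; exact ⟨hωy, hhω⟩⟩
    · exact fun hxy hx => hωy (hG.eq_of_apply_eq_self hhG hh1 hx hhω ▸ hxy)
  have hrel : ∀ x, piPart k x ω := fun x => by
    by_contra hne
    have h0 := Perm.card_modEq_card_filter_apply_eq_self (pow_orderOf_eq_one h) _ (hC ω)
    have h1 := Perm.card_modEq_card_filter_apply_eq_self (pow_orderOf_eq_one h) _ (hC x)
    rw [hfix, if_pos ((piPart k).refl ω), card_singleton] at h0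
    rw [hfix, if_neg fun h' => hne ((piPart k).symm h'), card_empty,
      card_filter_piPart_eq hz hk x ω] at h1
    exact hh.one_lt.ne' (Nat.dvd_one.1 (Nat.modEq_zero_iff_dvd.1 (h0.symm.trans h1)))
  exact Setoid.eq_top_iff.2 fun x y => (piPart k).trans (hrel x) ((piPart k).symm (hrel y))

theorem card_prime_of_joinCoherent [Nonempty Ω] (hG : IsFrobenius G) (hJ : JoinCoherent G) :
    (Fintype.card Ω).Prime := by
  obtain ⟨z, hzG, hz⟩ := hG.exists_piPart_eq_top_of_joinCoherent hJ
  have := hG.nontrivial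
  by_contra hnp
  obtain ⟨q, hqn, hq2, hqlt⟩ := Nat.exists_dvd_of_not_prime2 Fintype.one_lt_card hnp
  obtain ⟨ω⟩ := ‹Nonempty Ω›
  obtain ⟨h, hhG, hhω, hh⟩ := hG.exists_prime_orderOf_apply_eq_self ω
  obtain ⟨k, hkG, hk⟩ := hJ _ ⟨z ^ q, G.pow_mem hzG q, rfl⟩ _ ⟨h, hhG, rfl⟩
  have hg1 : z ^ q ≠ 1 :=
    pow_ne_one_of_lt_orderOf (by omega) (by rwa [orderOf_eq_card_of_piPart_eq_top hz])
  have hkfree : ∀ x, k x ≠ x := fun x hx => hg1 <|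
    eq_one_of_mem_zpowers_of_apply_eq_self hz (Subgroup.pow_mem _ (Subgroup.mem_zpowers z) q)
      (eq_of_piPart_of_apply_eq_self hx (hk ▸ le_sup_left (α := Setoid Ω) (piPart_apply_self _ x)))
  have hkz : k ∈ Subgroup.zpowers z :=
    (hG.mem_zpowers_iff_mem_frobeniusKernel hzG hz k).2 (mem_frobeniusKernel.2 ⟨hkG, .inr hkfree⟩)
  have htop := hG.piPart_eq_top_of_piPart_le hz hkz hhG hh hhω (hk ▸ le_sup_right)
  exact hG.not_piPart_pow_sup_piPart_apply hzG hz hqn (by omega) hhG hhω (hk ▸ htop ▸ trivial)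

/-! ### Meets -/

theorem card_stabilizer_eq_two_of_meetCoherent (hG : IsFrobenius G) (hM : MeetCoherent G)
    (ω : Ω) : #{g | g ∈ G ∧ g ω = ω} = 2 := by
  -- Left multiplication by a nontrivial `h ∈ G_ω` maps the `(n - 1)(|G_ω| - 1)` nontrivial
  -- elements fixing a point other than `ω` into the `n - 1` fixed-point-free elements.
  obtain ⟨h, hhG, hhω, hh1⟩ := hG.exists_ne_one_apply_eq_self ω
  have hmem : ∀ g ∈ ({g | g ∈ G ∧ g ≠ 1 ∧ ∃ u ∈ univ.erase ω, g u = u} : Finset (Perm Ω)),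
      h * g ∈ (frobeniusKernel G).erase 1 := by
    intro g hg
    simp only [mem_filter, mem_univ, true_and, mem_erase, and_true] at hg
    obtain ⟨hgG, hg1, u, huω, hgu⟩ := hg
    have hfree := hG.mul_apply_ne_self_of_meetCoherent hM hhG hgG hh1 hg1 huω hhω hgu
    exact mem_erase.2 ⟨fun h1 => hfree ω (by rw [h1, Perm.one_apply]),
      mem_frobeniusKernel.2 ⟨G.mul_mem hhG hgG, .inr hfree⟩⟩
  have hle : #(univ.erase ω) * (#{g | g ∈ G ∧ g ω = ω} - 1) ≤
      #((frobeniusKernel G).erase 1) := by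
    rw [← hG.card_ne_one_fixing (univ.erase ω) ω]
    convert card_le_card_of_injOn (h * ·) hmem (mul_right_injective h).injOn
  have : Nonempty Ω := ⟨ω⟩
  have := hG.nontrivial
  rw [card_erase_of_mem (mem_univ ω), card_univ,
    card_erase_of_mem (mem_frobeniusKernel.2 ⟨G.one_mem, .inl rfl⟩), hG.card_frobeniusKernel]
    at hle
  have hn := Fintype.one_lt_card (α := Ω)
  have hs : 1 < #{g | g ∈ G ∧ g ω = ω} :=
    one_lt_card.2 ⟨1, by simp [G.one_mem], h, by simp [hhG, hhω], hh1.symm⟩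
  have := Nat.le_of_mul_le_mul_left (hle.trans (Nat.mul_one _).ge) (by omega)
  omega

/-! ### Point stabilisers of order two -/

theorem eq_of_card_stabilizer_eq_two (h2 : ∀ x, #{g | g ∈ G ∧ g x = x} = 2) {a b : Perm Ω}
    (ha : a ∈ G) (hb : b ∈ G) (ha1 : a ≠ 1) (hb1 : b ≠ 1) {x : Ω} (hax : a x = x)
    (hbx : b x = x) : a = b := by
  by_contra hab
  have h3 : 2 < #{g | g ∈ G ∧ g x = x} :=
    two_lt_card.2 ⟨1, by simp [G.one_mem], a, by simp [ha, hax], b, by simp [hb, hbx],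
      ha1.symm, hb1.symm, hab⟩
  exact h3.ne' (h2 x)

theorem mul_self_eq_one_of_card_stabilizer_eq_two (h2 : ∀ x, #{g | g ∈ G ∧ g x = x} = 2)
    {a : Perm Ω} (ha : a ∈ G) (ha1 : a ≠ 1) {x : Ω} (hax : a x = x) : a * a = 1 := by
  by_contra haa
  have := eq_of_card_stabilizer_eq_two h2 (G.mul_mem ha ha) ha haa ha1
    (by rw [Perm.mul_apply, hax, hax]) hax
  exact ha1 (mul_eq_left.1 this)

theorem mul_mem_frobeniusKernel (hG : IsFrobenius G) (h2 : ∀ x, #{g | g ∈ G ∧ g x = x} = 2)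
    {a b : Perm Ω} (ha : a ∈ G) (hb : b ∈ G) (ha1 : a ≠ 1) (hb1 : b ≠ 1) {x y : Ω}
    (hax : a x = x) (hby : b y = y) : a * b ∈ frobeniusKernel G := by
  -- If `a * b ≠ 1` fixes a point, it is an involution, so `a` and `b` commute and `b` fixes the
  -- unique fixed point `x` of `a`.
  have haa := mul_self_eq_one_of_card_stabilizer_eq_two h2 ha ha1 hax
  refine mem_frobeniusKernel.2 ⟨G.mul_mem ha hb, or_iff_not_imp_left.2 fun hab1 v hv => ?_⟩
  have hcomm : b * a = a * b := by
    have hinv := inv_eq_of_mul_eq_one_left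
      (mul_self_eq_one_of_card_stabilizer_eq_two h2 (G.mul_mem ha hb) hab1 hv)
    rwa [mul_inv_rev, inv_eq_of_mul_eq_one_left haa, inv_eq_of_mul_eq_one_left
      (mul_self_eq_one_of_card_stabilizer_eq_two h2 hb hb1 hby)] at hinv
  have hbx : b x = x := hG.eq_of_apply_eq_self ha ha1
    (by rw [← Perm.mul_apply, ← hcomm, Perm.mul_apply, hax]) hax
  obtain rfl : x = y := hG.eq_of_apply_eq_self hb hb1 hbx hby
  rw [eq_of_card_stabilizer_eq_two h2 ha hb ha1 hb1 hax hbx] at haa hab1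
  exact hab1 haa

theorem exists_eq_mul_of_mem_frobeniusKernel [Nonempty Ω] (hG : IsFrobenius G)
    (h2 : ∀ x, #{g | g ∈ G ∧ g x = x} = 2) {s : Perm Ω} (hs : s ∈ G) (hs1 : s ≠ 1) {ω : Ω}
    (hsω : s ω = ω) {k : Perm Ω} (hk : k ∈ frobeniusKernel G) :
    ∃ t ∈ G, t ≠ 1 ∧ (∃ x, t x = x) ∧ k = s * t := by
  -- Left multiplication by `s ∈ G_ω` maps the `n` involutions of `G` into the Frobenius kernel,
  -- which also has `n` elements.
  have hT := hG.card_ne_one_fixing univ ω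
  rw [h2, card_univ, Nat.mul_one] at hT
  set T : Finset (Perm Ω) := {t | t ∈ G ∧ t ≠ 1 ∧ ∃ a ∈ univ, t a = a}
  have hsub : T.image (s * ·) ⊆ frobeniusKernel G := by
    intro g hg
    obtain ⟨t, ht, rfl⟩ := mem_image.1 hg
    obtain ⟨htG, ht1, a, hta⟩ := by simpa only [T, mem_filter, mem_univ, true_and] using ht
    exact hG.mul_mem_frobeniusKernel h2 hs htG hs1 ht1 hsω hta
  have hcard : #(frobeniusKernel G) ≤ #(T.image (s * ·)) := by
    rw [card_image_of_injective _ (mul_right_injective s), hG.card_frobeniusKernel]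
    exact Nat.le_of_eq (by convert hT.symm)
  rw [← eq_of_subset_of_card_le hsub hcard] at hk
  obtain ⟨t, ht, rfl⟩ := mem_image.1 hk
  obtain ⟨htG, ht1, a, hta⟩ := by simpa only [T, mem_filter, mem_univ, true_and] using ht
  exact ⟨t, htG, ht1, ⟨a, hta⟩, rfl⟩

noncomputable def kernel [Nonempty Ω] (hG : IsFrobenius G)
    (h2 : ∀ x, #{g | g ∈ G ∧ g x = x} = 2) : Subgroup (Perm Ω) where
  carrier := frobeniusKernel G
  one_mem' := mem_frobeniusKernel.2 ⟨G.one_mem, .inl rfl⟩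
  mul_mem' := by
    intro k k' hk hk'
    obtain ⟨ω⟩ := ‹Nonempty Ω›
    obtain ⟨s, hs, hsω, hs1⟩ := hG.exists_ne_one_apply_eq_self ω
    obtain ⟨t, htG, ht1, ⟨x, htx⟩, rfl⟩ :=
      hG.exists_eq_mul_of_mem_frobeniusKernel h2 hs hs1 hsω hk
    obtain ⟨t', ht'G, ht'1, ⟨y, ht'y⟩, rfl⟩ :=
      hG.exists_eq_mul_of_mem_frobeniusKernel h2 hs hs1 hsω hk'
    -- `s * t * (s * t') = (s * t * s) * t'`, a product of two involutions.
    have hss := mul_self_eq_one_of_card_stabilizer_eq_two h2 hs hs1 hsω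
    rw [← mul_assoc]
    refine hG.mul_mem_frobeniusKernel h2 (G.mul_mem (G.mul_mem hs htG) hs) ht'G ?_ ht'1
      (x := s x) ?_ ht'y
    · rintro hsts
      apply ht1
      calc t = s * (s * t * s) * s := by simp [← mul_assoc, hss, mul_assoc t s s]
        _ = 1 := by rw [hsts, mul_one, hss]
    · rw [Perm.mul_apply, Perm.mul_apply, ← Perm.mul_apply s s, hss, Perm.one_apply, htx]
  inv_mem' := by
    intro k hk
    obtain ⟨hkG, hk1 | hfree⟩ := mem_frobeniusKernel.1 hk
    · simp [hk1, mem_frobeniusKernel, G.one_mem]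
    · exact mem_frobeniusKernel.2 ⟨G.inv_mem hkG, .inr fun x hx =>
        hfree x (Perm.inv_eq_iff_eq.1 hx).symm⟩

section Kernel

variable [Nonempty Ω] (hG : IsFrobenius G) (h2 : ∀ x, #{g | g ∈ G ∧ g x = x} = 2)

theorem mem_kernel {g : Perm Ω} : g ∈ hG.kernel h2 ↔ g ∈ frobeniusKernel G :=
  Iff.rfl

theorem card_kernel : Nat.card (hG.kernel h2) = Fintype.card Ω := by
  rw [← Subgroup.card_filter_mem, ← hG.card_frobeniusKernel]
  congr 1
  ext g
  simp [mem_kernel]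

theorem mul_mul_eq_inv_of_mem_kernel {s : Perm Ω} (hs : s ∈ G) (hs1 : s ≠ 1) {ω : Ω}
    (hsω : s ω = ω) {k : Perm Ω} (hk : k ∈ hG.kernel h2) : s * k * s = k⁻¹ := by
  obtain ⟨t, htG, ht1, ⟨x, htx⟩, rfl⟩ := hG.exists_eq_mul_of_mem_frobeniusKernel h2 hs hs1 hsω hk
  have hss := mul_self_eq_one_of_card_stabilizer_eq_two h2 hs hs1 hsω
  have htt := mul_self_eq_one_of_card_stabilizer_eq_two h2 htG ht1 htx
  rw [mul_inv_rev, inv_eq_of_mul_eq_one_left hss, inv_eq_of_mul_eq_one_left htt, ← mul_assoc, hss,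
    one_mul]

theorem apply_apply_eq_inv_apply_of_mem_kernel {s : Perm Ω} (hs : s ∈ G) (hs1 : s ≠ 1) {ω : Ω}
    (hsω : s ω = ω) {k : Perm Ω} (hk : k ∈ hG.kernel h2) : s (k ω) = k⁻¹ ω := by
  rw [← hG.mul_mul_eq_inv_of_mem_kernel h2 hs hs1 hsω hk]
  simp [hsω]

theorem eq_one_of_mem_kernel_of_mul_self_eq_one {k : Perm Ω} (hk : k ∈ hG.kernel h2)
    (hkk : k * k = 1) : k = 1 := by
  obtain ⟨ω⟩ := ‹Nonempty Ω›
  obtain ⟨s, hs, hsω, hs1⟩ := hG.exists_ne_one_apply_eq_self ω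
  have hskω := hG.apply_apply_eq_inv_apply_of_mem_kernel h2 hs hs1 hsω hk
  rw [inv_eq_of_mul_eq_one_left hkk] at hskω
  exact eq_one_of_mem_frobeniusKernel_of_apply_eq_self hk
    (hG.eq_of_apply_eq_self hs hs1 hskω hsω)

theorem odd_orderOf_of_mem_kernel {k : Perm Ω} (hk : k ∈ hG.kernel h2) : Odd (orderOf k) := by
  refine (Nat.even_or_odd _).resolve_left fun ⟨j, hj⟩ => ?_
  have hkj : k ^ j = 1 := hG.eq_one_of_mem_kernel_of_mul_self_eq_one h2 (pow_mem hk j)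
    (by rw [← pow_add, ← hj, pow_orderOf_eq_one])
  have := orderOf_pos k
  have := orderOf_le_of_pow_eq_one (by omega) hkj
  omega

theorem piPart_le_piPart_of_meetCoherent (hM : MeetCoherent G) {s : Perm Ω} (hs : s ∈ G)
    (hs1 : s ≠ 1) {ω : Ω} (hsω : s ω = ω) {f : Perm Ω} (hf : f ∈ hG.kernel h2) (hf1 : f ≠ 1) :
    piPart s ≤ piPart f := by
  -- `π(f) ⊓ π(s)` relates `a ω` and `a⁻¹ ω` for a square root `a` of `f` in the kernel, so it is
  -- the partition of a nontrivial element fixing `ω`, which can only be `s`.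
  obtain ⟨m, hm⟩ := exists_pow_eq_self_of_coprime
    (Nat.coprime_two_left.2 (hG.odd_orderOf_of_mem_kernel h2 hf))
  set a := f ^ m
  have ha : a ∈ hG.kernel h2 := pow_mem hf m
  have haa : a * a = f := by rw [← pow_add, ← two_mul, pow_mul, hm]
  have hne : a⁻¹ ω ≠ a ω := fun h => hf1 <| eq_one_of_mem_frobeniusKernel_of_apply_eq_self hf
    (by rw [← haa, Perm.mul_apply, ← h]; simp)
  obtain ⟨k, hkG, hk⟩ := hM _ ⟨f, (mem_frobeniusKernel.1 hf).1, rfl⟩ _ ⟨s, hs, rfl⟩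
  have hkω : k ω = ω := eq_of_piPart_of_apply_eq_self hsω (hk ▸ piPart_apply_self k ω).2
  have hrel : piPart k (a⁻¹ ω) (a ω) := by
    rw [hk]
    refine ⟨(piPart_apply _ _ _).2 ⟨-1, ?_⟩, ?_⟩
    · simp [← haa]
    · simpa [hG.apply_apply_eq_inv_apply_of_mem_kernel h2 hs hs1 hsω ha] using
        piPart_apply_self s (a ω)
  have hk1 : k ≠ 1 := by
    rintro rfl
    rw [piPart_one] at hrel
    exact hne hrel
  rw [← eq_of_card_stabilizer_eq_two h2 hkG hs hk1 hs1 hkω hsω, hk]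
  exact inf_le_left

theorem kernel_le_zpowers_of_meetCoherent (hM : MeetCoherent G) {f : Perm Ω}
    (hf : f ∈ hG.kernel h2) (hf1 : f ≠ 1) : hG.kernel h2 ≤ Subgroup.zpowers f := by
  -- `b ω` and `s (b ω) = b⁻¹ ω` are `π(f)`-related, which forces `b ^ 2 ∈ ⟨f⟩`; and
  -- `b ∈ ⟨b ^ 2⟩` as `b` has odd order.
  obtain ⟨ω⟩ := ‹Nonempty Ω›
  obtain ⟨s, hs, hsω, hs1⟩ := hG.exists_ne_one_apply_eq_self ω
  intro b hb
  have hrel : piPart f (b⁻¹ ω) (b ω) := by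
    refine hG.piPart_le_piPart_of_meetCoherent h2 hM hs hs1 hsω hf hf1 ?_
    simpa [hG.apply_apply_eq_inv_apply_of_mem_kernel h2 hs hs1 hsω hb] using
      piPart_apply_self s (b ω)
  obtain ⟨j, hj⟩ := (piPart_apply _ _ _).1 hrel
  have hbfb : b * f ^ j * b = 1 := by
    refine eq_one_of_mem_frobeniusKernel_of_apply_eq_self
      (mul_mem (mul_mem hb (zpow_mem hf j)) hb : _ ∈ hG.kernel h2) (x := ω) ?_
    simp [hj]
  have hsq : b ^ 2 ∈ Subgroup.zpowers f := by
    refine Subgroup.mem_zpowers_iff.2 ⟨-j, ?_⟩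
    rw [zpow_neg, pow_two]
    refine (eq_inv_of_mul_eq_one_right ?_).symm
    simpa [mul_assoc] using congrArg (b⁻¹ * · * b) hbfb
  obtain ⟨m, hm⟩ := exists_pow_eq_self_of_coprime
    (Nat.coprime_two_left.2 (hG.odd_orderOf_of_mem_kernel h2 hb))
  rw [← hm]
  exact pow_mem hsq m

end Kernel

theorem card_prime_of_meetCoherent [Nonempty Ω] (hG : IsFrobenius G) (hM : MeetCoherent G) :
    (Fintype.card Ω).Prime := by
  have h2 := hG.card_stabilizer_eq_two_of_meetCoherent hM
  have := hG.nontrivial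
  have hK := hG.card_kernel h2
  have hq : Fact (Fintype.card Ω).minFac.Prime := ⟨Nat.minFac_prime Fintype.one_lt_card.ne'⟩
  obtain ⟨f, hf⟩ := exists_prime_orderOf_dvd_card' (G := hG.kernel h2) (Fintype.card Ω).minFac
    (by rw [hK]; exact Nat.minFac_dvd _)
  rw [← Subgroup.orderOf_coe] at hf
  have hf1 : (f : Perm Ω) ≠ 1 := fun h => hq.out.one_lt.ne' (by rw [← hf, h, orderOf_one])
  have hn : Fintype.card Ω ≤ orderOf (f : Perm Ω) := by
    rw [← hK, ← Nat.card_zpowers]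
    exact Subgroup.card_le_of_le (hG.kernel_le_zpowers_of_meetCoherent h2 hM f.2 hf1)
  rw [le_antisymm hn (hf ▸ Nat.minFac_le Fintype.card_pos)]
  exact hf ▸ hq.out

theorem nonempty_mulEquiv_dihedralGroup_of_meetCoherent [Nonempty Ω] (hG : IsFrobenius G)
    (hM : MeetCoherent G) : Nonempty (G ≃* DihedralGroup (Fintype.card Ω)) := by
  have h2 := hG.card_stabilizer_eq_two_of_meetCoherent hM
  have hp : Fact (Fintype.card Ω).Prime := ⟨hG.card_prime_of_meetCoherent hM⟩
  obtain ⟨f, hf⟩ := exists_prime_orderOf_dvd_card' (G := hG.kernel h2) (Fintype.card Ω)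
    (by rw [hG.card_kernel h2])
  obtain ⟨ω⟩ := ‹Nonempty Ω›
  obtain ⟨s, hs, hsω, hs1⟩ := hG.exists_ne_one_apply_eq_self ω
  have : NeZero (Fintype.card Ω) := ⟨Fintype.card_ne_zero⟩
  refine nonempty_mulEquiv_dihedralGroup (ρ := ⟨f, (mem_frobeniusKernel.1 f.2).1⟩) (σ := ⟨s, hs⟩)
    ?_ (by rw [Subgroup.orderOf_mk, Subgroup.orderOf_coe, hf])
    (Subtype.ext (mul_self_eq_one_of_card_stabilizer_eq_two h2 hs hs1 hsω))
    (Subtype.ext (hG.mul_mul_eq_inv_of_mem_kernel h2 hs hs1 hsω f.2)) ?_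
  · rw [← Subgroup.card_filter_mem, hG.card_eq_card_mul_card_stabilizer ω, h2, mul_comm]
  · intro hsf
    obtain ⟨k, hk⟩ := Subgroup.mem_zpowers_iff.1 hsf
    have hsK : s ∈ hG.kernel h2 := by
      rw [show s = (f : Perm Ω) ^ k from (congrArg Subtype.val hk).symm]
      exact zpow_mem f.2 k
    exact hs1 (eq_one_of_mem_frobeniusKernel_of_apply_eq_self hsK hsω)

theorem inf_mem_piSet_of_mem_frobeniusKernel (hG : IsFrobenius G) (hp : (Fintype.card Ω).Prime)
    {a b : Perm Ω} (ha : a ∈ frobeniusKernel G) (hb : b ∈ G) : piPart a ⊓ piPart b ∈ piSet G := by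
  obtain ⟨haG, rfl | hfree⟩ := mem_frobeniusKernel.1 ha
  · exact ⟨1, G.one_mem, by rw [piPart_one, bot_inf_eq]⟩
  · by_cases ha1 : a = 1
    · exact ⟨1, G.one_mem, by rw [ha1, piPart_one, bot_inf_eq]⟩
    · exact ⟨b, hb, by rw [hG.piPart_eq_top_of_prime hp haG ha1 hfree, top_inf_eq]⟩

theorem meetCoherent_of_prime (hG : IsFrobenius G) (hp : (Fintype.card Ω).Prime)
    (h2 : ∀ x, #{g | g ∈ G ∧ g x = x} = 2) : MeetCoherent G := by
  rintro _ ⟨a, ha, rfl⟩ _ ⟨b, hb, rfl⟩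
  by_cases haK : a ∈ frobeniusKernel G
  · exact hG.inf_mem_piSet_of_mem_frobeniusKernel hp haK hb
  by_cases hbK : b ∈ frobeniusKernel G
  · exact inf_comm (piPart a) _ ▸ hG.inf_mem_piSet_of_mem_frobeniusKernel hp hbK ha
  simp only [mem_frobeniusKernel, ha, hb, true_and, not_or, not_forall, not_not] at haK hbK
  obtain ⟨ha1, x, hax⟩ := haK
  obtain ⟨hb1, y, hby⟩ := hbK
  by_cases hab : a = b
  · exact ⟨a, ha, by rw [← hab, inf_idem]⟩
  · refine ⟨1, G.one_mem, ?_⟩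
    rw [piPart_one, hG.piPart_inf_piPart_eq_bot_of_mul_self_eq_one ha hb hab
      (mul_self_eq_one_of_card_stabilizer_eq_two h2 ha ha1 hax)
      (mul_self_eq_one_of_card_stabilizer_eq_two h2 hb hb1 hby)]

end IsFrobenius

end

/-- A finite Frobenius group is join-coherent if and only if its degree is prime, and
meet-coherent if and only if it is dihedral of prime degree. -/
theorem frobenius_coherence {Ω : Type*} [Finite Ω] [Nonempty Ω]
    (G : Subgroup (Equiv.Perm Ω))
    (htrans : ∀ a b : Ω, ∃ g ∈ G, g a = b)
    (hstab : ∀ ω : Ω, ∃ g ∈ G, g ω = ω ∧ g ≠ 1)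
    (hfrob : ∀ g ∈ G, ∀ ω₁ ω₂ : Ω, ω₁ ≠ ω₂ → g ω₁ = ω₁ → g ω₂ = ω₂ → g = 1) :
    (JoinCoherent G ↔ (Nat.card Ω).Prime) ∧
    (MeetCoherent G ↔ ∃ p : ℕ, p.Prime ∧ Nat.card Ω = p ∧
      Nonempty (↥G ≃* DihedralGroup p)) := by
  classical
  cases nonempty_fintype Ω
  have hG : IsFrobenius G := ⟨htrans, hstab, hfrob⟩
  rw [Nat.card_eq_fintype_card]
  refine ⟨⟨hG.card_prime_of_joinCoherent, hG.joinCoherent_of_prime⟩, ⟨fun hM => ?_, ?_⟩⟩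
  · exact ⟨_, hG.card_prime_of_meetCoherent hM, rfl,
      hG.nonempty_mulEquiv_dihedralGroup_of_meetCoherent hM⟩
  · rintro ⟨p, hp, hcard, ⟨e⟩⟩
    refine hG.meetCoherent_of_prime (hcard ▸ hp) fun x => ?_
    have h := hG.card_eq_card_mul_card_stabilizer x
    rw [Subgroup.card_filter_mem, Nat.card_congr e.toEquiv, DihedralGroup.nat_card, hcard,
      mul_comm] at h
    exact (Nat.eq_of_mul_eq_mul_left hp.pos h).symm
end
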